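/- arXiv:2506.12022 — 13 statements merged into one kernel-verified Lean document; each statement's English description precedes it below -/
import Mathlib

section
/- For all n, k ∈ ℕ, the sign-rank of the k-Hamming Distance matrix satisfies signrank(HD_k^n) ≤ (1 + 16^{k+1})². In particular, signrank(HD_k^n) = 2^{O(k)}, independent of n. -/
open Matrix

namespace HDSR

noncomputable section

def bv (b : Bool) : ℝ := if b then 1 else 0

def zv {n : ℕ} (x y : Fin n → Bool) (j : Fin n) : ℝ := bv (x j) - bv (y j)

def Hmat {n : ℕ} (K : ℕ) (τ w : Fin n → ℝ) : Matrix (Fin K) (Fin K) ℝ :=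
  Matrix.of fun i i' => ∑ j, w j * τ j ^ ((i : ℕ) + (i' : ℕ) + 1)

lemma zv_ne_zero_iff {n : ℕ} (x y : Fin n → Bool) (j : Fin n) :
    zv x y j ≠ 0 ↔ x j ≠ y j := by
  cases hx : x j <;> cases hy : y j <;> simp [zv, bv, hx, hy]

lemma supp_card {n : ℕ} (x y : Fin n → Bool) :
    (Finset.univ.filter fun j => zv x y j ≠ 0).card = hammingDist x y := by
  rw [hammingDist]
  congr 1
  apply Finset.filter_congr
  intro j _
  simp [zv_ne_zero_iff]

lemma hmat_vanish {n : ℕ} (K : ℕ) (τ w : Fin n → ℝ)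
    (h : (Finset.univ.filter fun j => w j ≠ 0).card < K) : (Hmat K τ w).det = 0 := by
  classical
  set s := Finset.univ.filter (fun j => w j ≠ 0) with hs
  set U : Matrix (Fin K) {j // j ∈ s} ℝ := fun i j => w j.1 * τ j.1 ^ ((i:ℕ)+1) with hU
  set V : Matrix {j // j ∈ s} (Fin K) ℝ := fun j i' => τ j.1 ^ ((i':ℕ)) with hV
  have hUV : Hmat K τ w = U * V := by
    ext i i'
    rw [Matrix.mul_apply]
    show (∑ j, w j * τ j ^ ((i : ℕ) + (i' : ℕ) + 1)) = _
    have h1 : (∑ j, w j * τ j ^ ((i : ℕ) + (i' : ℕ) + 1))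
        = ∑ j ∈ s, w j * τ j ^ ((i : ℕ) + (i' : ℕ) + 1) := by
      refine (Finset.sum_subset (Finset.subset_univ s) ?_).symm
      intro j _ hj
      have : w j = 0 := by
        by_contra hw
        exact hj (Finset.mem_filter.mpr ⟨Finset.mem_univ _, hw⟩)
      simp [this]
    rw [h1, ← Finset.sum_coe_sort s (fun j => w j * τ j ^ ((i : ℕ) + (i' : ℕ) + 1))]
    apply Finset.sum_congr rfl
    intro j _
    simp only [hU, hV]
    ring
  by_contra hdet
  have hunit : IsUnit (Hmat K τ w) :=
    (Matrix.isUnit_iff_isUnit_det _).mpr (isUnit_iff_ne_zero.mpr hdet)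
  have hr := Matrix.rank_of_isUnit _ hunit
  have hle : (Hmat K τ w).rank ≤ s.card := by
    rw [hUV]
    refine le_trans (Matrix.rank_mul_le_left U V) (le_trans (Matrix.rank_le_card_width U) ?_)
    rw [Fintype.card_coe]
  rw [hr, Fintype.card_fin] at hle
  omega

lemma hmat_exists {n : ℕ} (K : ℕ) (w : Fin n → ℝ)
    (h : K ≤ (Finset.univ.filter fun j => w j ≠ 0).card) :
    ∃ τ : Fin n → ℝ, (Hmat K τ w).det ≠ 0 := by
  classical
  obtain ⟨J, hJsub, hJcard⟩ := Finset.exists_subset_card_eq h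
  set e : Fin K ↪o Fin n := J.orderEmbOfFin hJcard with he
  have heJ : ∀ a, e a ∈ J := fun a => Finset.orderEmbOfFin_mem J hJcard a
  have hinj : Function.Injective e := e.injective
  set wv : Fin K → ℝ := fun a => (a : ℕ) + 1 with hwv
  set τ : Fin n → ℝ := fun j => ∑ a, if e a = j then wv a else 0 with hτ
  have hτe : ∀ a, τ (e a) = wv a := by
    intro a
    show (∑ b, if e b = e a then wv b else 0) = wv a
    rw [Finset.sum_eq_single a]
    · simp
    · intro b _ hb
      exact if_neg (fun hc => hb (hinj hc))
    · intro ha; exact absurd (Finset.mem_univ a) ha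
  have hτ0 : ∀ j, j ∉ Set.range e → τ j = 0 := by
    intro j hj
    show (∑ b, if e b = j then wv b else 0) = 0
    apply Finset.sum_eq_zero
    intro a _
    exact if_neg (fun hc => hj ⟨a, hc⟩)
  refine ⟨τ, ?_⟩
  set d : Fin K → ℝ := fun a => w (e a) * wv a with hd
  set B : Matrix (Fin K) (Fin K) ℝ := Matrix.vandermonde wv with hB
  have hfac : Hmat K τ w = Bᵀ * (Matrix.diagonal d * B) := by
    ext i i'
    rw [Matrix.mul_apply]
    show (∑ j, w j * τ j ^ ((i : ℕ) + (i' : ℕ) + 1)) = _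
    have h1 : (∑ j, w j * τ j ^ ((i : ℕ) + (i' : ℕ) + 1))
        = ∑ j ∈ Finset.univ.image e, w j * τ j ^ ((i : ℕ) + (i' : ℕ) + 1) := by
      refine (Finset.sum_subset (Finset.subset_univ _) ?_).symm
      intro j _ hj
      have : τ j = 0 := by
        apply hτ0
        rintro ⟨a, rfl⟩
        exact hj (Finset.mem_image_of_mem e (Finset.mem_univ a))
      rw [this]
      simp
    rw [h1, Finset.sum_image (fun a _ b _ hab => hinj hab)]
    apply Finset.sum_congr rfl
    intro a _
    rw [hτe a, Matrix.transpose_apply, Matrix.diagonal_mul]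
    simp only [hB, Matrix.vandermonde, hd]
    show w (e a) * wv a ^ ((i : ℕ) + (i' : ℕ) + 1) = (Matrix.of fun i j => wv i ^ (j : ℕ)) a i * (w (e a) * wv a * (Matrix.of fun i j => wv i ^ (j : ℕ)) a i')
    simp only [Matrix.of_apply]
    ring
  rw [hfac, Matrix.det_mul, Matrix.det_mul, Matrix.det_transpose, Matrix.det_diagonal]
  have hBdet : B.det ≠ 0 := by
    rw [hB, Matrix.det_vandermonde]
    apply ne_of_gt
    apply Finset.prod_pos
    intro i _
    apply Finset.prod_pos
    intro j hj
    have hij : i < j := Finset.mem_Ioi.mp hj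
    have hij' : (i : ℕ) < (j : ℕ) := hij
    have : wv i < wv j := by
      simp only [hwv]
      have : ((i:ℕ):ℝ) < ((j:ℕ):ℝ) := by exact_mod_cast hij'
      linarith
    linarith
  have hddet : (∏ a, d a) ≠ 0 := by
    apply Finset.prod_ne_zero_iff.mpr
    intro a _
    apply mul_ne_zero
    · have : e a ∈ Finset.univ.filter (fun j => w j ≠ 0) := hJsub (heJ a)
      exact (Finset.mem_filter.mp this).2
    · simp only [hwv]; positivity
  exact mul_ne_zero hBdet (mul_ne_zero hddet hBdet)

def Hpoly {n : ℕ} (K : ℕ) (w : Fin n → ℝ) : MvPolynomial (Fin n) ℝ :=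
  Matrix.det (Matrix.of fun i i' : Fin K =>
    ∑ j, MvPolynomial.C (w j) * (MvPolynomial.X j) ^ ((i : ℕ) + (i' : ℕ) + 1))

lemma eval_Hpoly {n : ℕ} (K : ℕ) (τ w : Fin n → ℝ) :
    MvPolynomial.eval τ (Hpoly K w) = (Hmat K τ w).det := by
  unfold Hpoly Hmat
  rw [RingHom.map_det]
  congr 1
  ext i i'
  simp [RingHom.mapMatrix_apply]

lemma common_tau {n : ℕ} (k : ℕ) : ∃ τ : Fin n → ℝ, ∀ x y : Fin n → Bool,
    (k ≤ hammingDist x y → (Hmat k τ (zv x y)).det ≠ 0) ∧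
    ((k+1) ≤ hammingDist x y → (Hmat (k+1) τ (zv x y)).det ≠ 0) := by
  classical
  set X := (Fin n → Bool)
  set S1 : Finset (X × X) := Finset.univ.filter (fun p => k ≤ hammingDist p.1 p.2) with hS1
  set S2 : Finset (X × X) := Finset.univ.filter (fun p => k + 1 ≤ hammingDist p.1 p.2) with hS2
  have hpoly_ne : ∀ (K : ℕ) (x y : X), K ≤ hammingDist x y → Hpoly K (zv x y) ≠ 0 := by
    intro K x y hK
    obtain ⟨τ0, hτ0⟩ := hmat_exists K (zv x y) (by rw [supp_card]; exact hK)
    intro hzero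
    apply hτ0
    rw [← eval_Hpoly, hzero, map_zero]
  set Φ : MvPolynomial (Fin n) ℝ :=
    (∏ p ∈ S1, Hpoly k (zv p.1 p.2)) * (∏ p ∈ S2, Hpoly (k+1) (zv p.1 p.2)) with hΦ
  have hΦne : Φ ≠ 0 := by
    apply mul_ne_zero
    · exact Finset.prod_ne_zero_iff.mpr
        (fun p hp => hpoly_ne k p.1 p.2 (Finset.mem_filter.mp hp).2)
    · exact Finset.prod_ne_zero_iff.mpr
        (fun p hp => hpoly_ne (k+1) p.1 p.2 (Finset.mem_filter.mp hp).2)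
  have hex : ∃ τ : Fin n → ℝ, MvPolynomial.eval τ Φ ≠ 0 := by
    by_contra hc
    push_neg at hc
    exact hΦne (MvPolynomial.funext (fun τ => by rw [hc τ, map_zero]))
  obtain ⟨τ, hτ⟩ := hex
  refine ⟨τ, fun x y => ⟨?_, ?_⟩⟩
  · intro hk
    rw [← eval_Hpoly]
    have hmem : (x, y) ∈ S1 := Finset.mem_filter.mpr ⟨Finset.mem_univ _, hk⟩
    intro hzero
    apply hτ
    rw [hΦ, _root_.map_mul]
    apply mul_eq_zero_of_left
    rw [map_prod]
    exact Finset.prod_eq_zero hmem hzero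
  · intro hk
    rw [← eval_Hpoly]
    have hmem : (x, y) ∈ S2 := Finset.mem_filter.mpr ⟨Finset.mem_univ _, hk⟩
    intro hzero
    apply hτ
    rw [hΦ, _root_.map_mul]
    apply mul_eq_zero_of_right
    rw [map_prod]
    exact Finset.prod_eq_zero hmem hzero

lemma rank_le_span_card {X Y : Type*} [Fintype X] [Fintype Y] (A : Matrix X Y ℝ)
    (s : Finset (X → ℝ))
    (h : ∀ y, (fun x => A x y) ∈ Submodule.span ℝ (s : Set (X → ℝ))) : A.rank ≤ s.card := by
  have hle : LinearMap.range A.mulVecLin ≤ Submodule.span ℝ (s : Set (X → ℝ)) := by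
    rintro f ⟨v, rfl⟩
    have hv : A.mulVecLin v = ∑ y, v y • (fun x => A x y) := by
      funext x
      simp only [Matrix.mulVecLin_apply, Matrix.mulVec, dotProduct, Finset.sum_apply,
        Pi.smul_apply, smul_eq_mul]
      exact Finset.sum_congr rfl (fun y _ => mul_comm _ _)
    rw [hv]
    exact Submodule.sum_mem _ (fun y _ => Submodule.smul_mem _ _ (h y))
  calc A.rank = Module.finrank ℝ (LinearMap.range A.mulVecLin) := rfl
    _ ≤ Module.finrank ℝ (Submodule.span ℝ (s : Set (X → ℝ))) := Submodule.finrank_mono hle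
    _ ≤ s.card := finrank_span_finset_le_card s

lemma exponents_card {ν D : ℕ} (E : Finset (Fin ν → ℕ))
    (hE : ∀ e ∈ E, (∑ i, e i) ≤ D) : E.card ≤ 2 ^ (ν + D + 1) := by
  classical
  -- partial sums map
  set ps : (Fin ν → ℕ) → Fin (ν+1) → ℕ :=
    fun e i => (i : ℕ) + ∑ j ∈ Finset.univ.filter (fun j : Fin ν => (j : ℕ) < (i : ℕ)), e j
    with hps
  have hlt : ∀ e ∈ E, ∀ i : Fin (ν+1), ps e i < ν + D + 1 := by
    intro e he i
    have h1 : (∑ j ∈ Finset.univ.filter (fun j : Fin ν => (j : ℕ) < (i : ℕ)), e j) ≤ ∑ j, e j :=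
      Finset.sum_le_sum_of_subset (Finset.filter_subset _ _)
    have h2 := hE e he
    have h3 : (i : ℕ) ≤ ν := by omega
    simp only [hps]
    omega
  set f : (Fin ν → ℕ) → Fin (ν+1) → Fin (ν + D + 1) :=
    fun e i => if h : e ∈ E then ⟨ps e i, hlt e h i⟩ else ⟨0, by omega⟩ with hf
  have hmono : ∀ e ∈ E, StrictMono (f e) := by
    intro e he i i' hii'
    have hval : (i : ℕ) < (i' : ℕ) := hii'
    have hsub : Finset.univ.filter (fun j : Fin ν => (j : ℕ) < (i : ℕ)) ⊆
        Finset.univ.filter (fun j : Fin ν => (j : ℕ) < (i' : ℕ)) := by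
      intro j hj
      simp only [Finset.mem_filter] at hj ⊢
      exact ⟨hj.1, by omega⟩
    have hsum : (∑ j ∈ Finset.univ.filter (fun j : Fin ν => (j : ℕ) < (i : ℕ)), e j) ≤
        ∑ j ∈ Finset.univ.filter (fun j : Fin ν => (j : ℕ) < (i' : ℕ)), e j :=
      Finset.sum_le_sum_of_subset hsub
    show (f e i) < (f e i')
    simp only [hf, dif_pos he]
    show (⟨ps e i, _⟩ : Fin (ν + D + 1)) < ⟨ps e i', _⟩
    rw [Fin.mk_lt_mk]
    simp only [hps]
    omega
  -- injectivity on E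
  have hinj : Set.InjOn (fun e => Finset.image (f e) Finset.univ) (E : Set (Fin ν → ℕ)) := by
    intro e he e' he' him
    simp only at him
    have he'' : e ∈ E := he
    have he''' : e' ∈ E := he'
    -- equal images ⇒ equal functions via order embeddings
    have hcard : (Finset.image (f e) Finset.univ).card = ν + 1 := by
      rw [Finset.card_image_of_injective _ (hmono e he'').injective, Finset.card_univ,
        Fintype.card_fin]
    have hfeq : f e = f e' := by
      have h1 := Finset.orderEmbOfFin_unique' hcard
        (f := OrderEmbedding.ofStrictMono (f e) (hmono e he''))
        (fun x => Finset.mem_image_of_mem _ (Finset.mem_univ x))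
      have hcard' : (Finset.image (f e) Finset.univ).card = ν + 1 := hcard
      have h2 := Finset.orderEmbOfFin_unique' hcard'
        (f := OrderEmbedding.ofStrictMono (f e') (hmono e' he'''))
        (fun x => by rw [him]; exact Finset.mem_image_of_mem _ (Finset.mem_univ x))
      have := h1.trans h2.symm
      funext i
      exact congrFun (congrArg (fun (g : Fin (ν+1) ↪o Fin (ν+D+1)) => (g : Fin (ν+1) → Fin (ν+D+1))) this) i
    -- recover e from partial sums
    have hpseq : ∀ i : Fin (ν+1), ps e i = ps e' i := by
      intro i
      have := congrFun hfeq i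
      simp only [hf, dif_pos he'', dif_pos he'''] at this
      exact congrArg Fin.val this
    funext i
    have hsplit : ∀ (g : Fin ν → ℕ),
        (∑ j ∈ Finset.univ.filter (fun j : Fin ν => (j : ℕ) < (i : ℕ) + 1), g j)
        = (∑ j ∈ Finset.univ.filter (fun j : Fin ν => (j : ℕ) < (i : ℕ)), g j) + g i := by
      intro g
      have hins : Finset.univ.filter (fun j : Fin ν => (j : ℕ) < (i : ℕ) + 1)
          = insert i (Finset.univ.filter (fun j : Fin ν => (j : ℕ) < (i : ℕ))) := by
        ext j
        simp only [Finset.mem_filter, Finset.mem_insert, Finset.mem_univ, true_and]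
        constructor
        · intro hj
          rcases Nat.lt_succ_iff_lt_or_eq.mp hj with h | h
          · exact Or.inr h
          · exact Or.inl (Fin.ext h)
        · rintro (rfl | hj)
          · omega
          · omega
      rw [hins, Finset.sum_insert (by simp)]
      omega
    have h1 := hpseq i.castSucc
    have h2 := hpseq i.succ
    simp only [hps, Fin.coe_castSucc, Fin.val_succ] at h1 h2
    rw [hsplit e, hsplit e'] at h2
    omega
  -- conclude
  calc E.card ≤ Fintype.card (Finset (Fin (ν + D + 1))) := by
        apply Finset.card_le_card_of_injOn (fun e => Finset.image (f e) Finset.univ)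
          (fun e _ => Finset.mem_univ _) hinj |>.trans
        rw [Finset.card_univ]
    _ = 2 ^ (ν + D + 1) := by rw [Fintype.card_finset, Fintype.card_fin]

lemma rank_le_of_poly {X Y : Type*} [Fintype X] [Fintype Y] (ν D : ℕ)
    (A : Matrix X Y ℝ) (F : MvPolynomial (Fin ν ⊕ Fin ν) ℝ)
    (a : Fin ν → X → ℝ) (b : Fin ν → Y → ℝ)
    (hF : ∀ x y, A x y =
      MvPolynomial.eval (Sum.elim (fun m => a m x) (fun m => b m y)) F)
    (hdeg : F.totalDegree ≤ D) : A.rank ≤ 2 ^ (ν + D + 1) := by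
  classical
  set E : Finset (Fin ν → ℕ) := F.support.image (fun d => fun m : Fin ν => d (Sum.inl m))
    with hEdef
  set mono : (Fin ν → ℕ) → X → ℝ := fun e x => ∏ m, a m x ^ e m with hmono
  set s : Finset (X → ℝ) := E.image mono with hsdef
  have hspan : ∀ y, (fun x => A x y) ∈ Submodule.span ℝ (s : Set (X → ℝ)) := by
    intro y
    have hdecomp : (fun x => A x y) = ∑ d ∈ F.support,
        (MvPolynomial.coeff d F * ∏ m, b m y ^ d (Sum.inr m)) •
          mono (fun m => d (Sum.inl m)) := by
      funext x
      rw [Finset.sum_apply]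
      rw [hF x y, MvPolynomial.eval_eq']
      apply Finset.sum_congr rfl
      intro d _
      rw [Pi.smul_apply, smul_eq_mul]
      rw [Fintype.prod_sum_type]
      simp only [hmono, Sum.elim_inl, Sum.elim_inr]
      ring
    rw [hdecomp]
    apply Submodule.sum_mem
    intro d hd
    apply Submodule.smul_mem
    apply Submodule.subset_span
    rw [hsdef]
    rw [Finset.coe_image]
    exact Set.mem_image_of_mem _ (by
      rw [hEdef, Finset.coe_image]
      exact Set.mem_image_of_mem _ hd)
  have h1 : A.rank ≤ s.card := rank_le_span_card A s hspan
  have h2 : s.card ≤ E.card := Finset.card_image_le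
  have h3 : E.card ≤ 2 ^ (ν + D + 1) := by
    apply exponents_card
    intro e he
    rw [hEdef] at he
    obtain ⟨d, hd, rfl⟩ := Finset.mem_image.mp he
    show (∑ m, d (Sum.inl m)) ≤ D
    have hsum : (∑ m, d (Sum.inl m)) ≤ ∑ i : Fin ν ⊕ Fin ν, d i := by
      rw [Fintype.sum_sum_type]
      exact Nat.le_add_right _ _
    have hsum2 : (∑ i : Fin ν ⊕ Fin ν, d i) = d.sum (fun _ c => c) :=
      (Finsupp.sum_fintype d (fun _ c => c) (fun i => rfl)).symm
    have hsum3 := MvPolynomial.le_totalDegree hd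
    omega
  omega

lemma det_totalDegree_le {σ : Type*} (K : ℕ)
    (M : Matrix (Fin K) (Fin K) (MvPolynomial σ ℝ))
    (h : ∀ i i', (M i i').totalDegree ≤ 1) : M.det.totalDegree ≤ K := by
  rw [Matrix.det_apply']
  refine le_trans (MvPolynomial.totalDegree_finset_sum _ _) ?_
  apply Finset.sup_le
  intro σp _
  have h1 : ((((Equiv.Perm.sign σp : ℤˣ) : ℤ) : MvPolynomial σ ℝ)).totalDegree = 0 := by
    rw [← map_intCast (MvPolynomial.C : ℝ →+* MvPolynomial σ ℝ)]
    exact MvPolynomial.totalDegree_C _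
  refine le_trans (MvPolynomial.totalDegree_mul _ _) ?_
  rw [h1, zero_add]
  refine le_trans (MvPolynomial.totalDegree_finset_prod _ _) ?_
  calc (∑ i, (M (σp i) i).totalDegree) ≤ ∑ _i : Fin K, 1 :=
        Finset.sum_le_sum (fun i _ => h _ _)
    _ = K := by simp


lemma tdeg_XsubX {σ : Type*} (a b : σ) :
    (MvPolynomial.X a - MvPolynomial.X b : MvPolynomial σ ℝ).totalDegree ≤ 1 := by
  rw [sub_eq_add_neg]
  refine le_trans (MvPolynomial.totalDegree_add _ _) ?_
  rw [MvPolynomial.totalDegree_neg]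
  simp [MvPolynomial.totalDegree_X]

def af {n : ℕ} (τ : Fin n → ℝ) {M : ℕ} (m : Fin M) (x : Fin n → Bool) : ℝ :=
  ∑ j, bv (x j) * τ j ^ ((m : ℕ) + 1)

lemma eval_det {n : ℕ} (τ : Fin n → ℝ) (x y : Fin n → Bool) (K M : ℕ)
    (hK : ∀ (i i' : Fin K), (i : ℕ) + (i' : ℕ) < M) :
    MvPolynomial.eval (Sum.elim (fun m : Fin M => af τ m x) (fun m : Fin M => af τ m y))
      (Matrix.det (Matrix.of fun i i' : Fin K =>
        MvPolynomial.X (Sum.inl (⟨(i : ℕ) + (i' : ℕ), hK i i'⟩ : Fin M)) -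
        MvPolynomial.X (Sum.inr (⟨(i : ℕ) + (i' : ℕ), hK i i'⟩ : Fin M))))
    = (Hmat K τ (zv x y)).det := by
  rw [RingHom.map_det]
  congr 1
  ext i i'
  simp only [RingHom.mapMatrix_apply, Matrix.map_apply, Matrix.of_apply, map_sub,
    MvPolynomial.eval_X, Sum.elim_inl, Sum.elim_inr]
  show af τ _ x - af τ _ y = ∑ j, zv x y j * τ j ^ ((i : ℕ) + (i' : ℕ) + 1)
  unfold af zv
  rw [← Finset.sum_sub_distrib]
  apply Finset.sum_congr rfl
  intro j _
  show bv (x j) * τ j ^ (((i : ℕ) + (i' : ℕ)) + 1) - bv (y j) * τ j ^ (((i : ℕ) + (i' : ℕ)) + 1) = _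
  ring

end

end HDSR

open Matrix

noncomputable def signrank {I J : Type*} [Fintype J] (M : Matrix I J Bool) : ℕ :=
  sInf {r : ℕ | ∃ A : Matrix I J ℝ, A.rank = r ∧
    ∀ i j, (M i j = true → 0 < A i j) ∧ (M i j = false → A i j < 0)}

def HD (n k : ℕ) : Matrix (Fin n → Bool) (Fin n → Bool) Bool :=
  Matrix.of fun x y => decide (hammingDist x y = k)

set_option maxHeartbeats 2000000 in
theorem stmt0 (n k : ℕ) : signrank (HD n k) ≤ (1 + 16 ^ (k + 1)) ^ 2 := by
  classical
  obtain ⟨τ, hτ⟩ := HDSR.common_tau (n := n) k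
  set X := (Fin n → Bool)
  set P : X → X → ℝ := fun x y => (HDSR.Hmat k τ (HDSR.zv x y)).det with hP
  set N : X → X → ℝ := fun x y => (HDSR.Hmat (k+1) τ (HDSR.zv x y)).det with hN
  have hPvan : ∀ x y : X, hammingDist x y < k → P x y = 0 := by
    intro x y h
    exact HDSR.hmat_vanish k τ _ (by rw [HDSR.supp_card]; exact h)
  have hNvan : ∀ x y : X, hammingDist x y < k + 1 → N x y = 0 := by
    intro x y h
    exact HDSR.hmat_vanish (k+1) τ _ (by rw [HDSR.supp_card]; exact h)
  have hPnz : ∀ x y : X, k ≤ hammingDist x y → P x y ≠ 0 := fun x y h => (hτ x y).1 h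
  have hNnz : ∀ x y : X, k + 1 ≤ hammingDist x y → N x y ≠ 0 := fun x y h => (hτ x y).2 h
  set Sk : Finset (X × X) := Finset.univ.filter (fun p => hammingDist p.1 p.2 = k) with hSk
  set Sk1 : Finset (X × X) := Finset.univ.filter (fun p => k + 1 ≤ hammingDist p.1 p.2) with hSk1
  set μ : ℝ := (1/2) * ∏ p ∈ Sk, min 1 (P p.1 p.2 ^ 2) with hμ
  set Cc : ℝ := 1 + ∑ p ∈ Sk1, P p.1 p.2 ^ 2 / N p.1 p.2 ^ 2 with hCc
  have hfac_pos : ∀ p ∈ Sk, (0:ℝ) < min 1 (P p.1 p.2 ^ 2) := by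
    intro p hp
    have hk : hammingDist p.1 p.2 = k := (Finset.mem_filter.mp hp).2
    have : P p.1 p.2 ≠ 0 := hPnz _ _ (le_of_eq hk.symm)
    exact lt_min one_pos (by positivity)
  have hμpos : 0 < μ := by
    exact mul_pos (by norm_num) (Finset.prod_pos hfac_pos)
  have hμle : ∀ x y : X, hammingDist x y = k → μ ≤ (1/2) * P x y ^ 2 := by
    intro x y hxy
    have hmem : (x, y) ∈ Sk := Finset.mem_filter.mpr ⟨Finset.mem_univ _, hxy⟩
    have h1 : ∏ p ∈ Sk, min 1 (P p.1 p.2 ^ 2) ≤ P x y ^ 2 := by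
      rw [← Finset.prod_erase_mul _ _ hmem]
      have h2 : ∏ p ∈ Sk.erase (x,y), min 1 (P p.1 p.2 ^ 2) ≤ 1 :=
        Finset.prod_le_one (fun p hp => le_of_lt (hfac_pos p (Finset.mem_of_mem_erase hp)))
          (fun p _ => min_le_left _ _)
      calc (∏ p ∈ Sk.erase (x,y), min 1 (P p.1 p.2 ^ 2)) * min 1 (P (x,y).1 (x,y).2 ^ 2)
          ≤ 1 * min 1 (P x y ^ 2) := by
            apply mul_le_mul_of_nonneg_right h2 (le_of_lt (hfac_pos _ hmem))
        _ ≤ P x y ^ 2 := by rw [one_mul]; exact min_le_right _ _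
    rw [hμ]
    nlinarith
  -- the sign matrix
  set A : Matrix X X ℝ := Matrix.of (fun x y => P x y ^ 2 - Cc * N x y ^ 2 - μ) with hA
  have hsign : ∀ x y : X, (HD n k x y = true → 0 < A x y) ∧ (HD n k x y = false → A x y < 0) := by
    intro x y
    have hAxy : A x y = P x y ^ 2 - Cc * N x y ^ 2 - μ := rfl
    have hHD : HD n k x y = decide (hammingDist x y = k) := rfl
    constructor
    · intro ht
      have hk : hammingDist x y = k := by
        rw [hHD] at ht; exact of_decide_eq_true ht
      have hNz : N x y = 0 := hNvan x y (by omega)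
      have := hμle x y hk
      have hPz : P x y ≠ 0 := hPnz x y (le_of_eq hk.symm)
      rw [hAxy, hNz]
      have : 0 < P x y ^ 2 := by positivity
      nlinarith [hμle x y hk]
    · intro hf
      have hk : hammingDist x y ≠ k := by
        rw [hHD] at hf; exact of_decide_eq_false hf
      rcases lt_or_gt_of_ne hk with hlt | hgt
      · have hPz : P x y = 0 := hPvan x y hlt
        have hNz : N x y = 0 := hNvan x y (by omega)
        rw [hAxy, hPz, hNz]
        norm_num
        nlinarith
      · -- dist ≥ k+1
        have hmem : (x, y) ∈ Sk1 := Finset.mem_filter.mpr ⟨Finset.mem_univ _, hgt⟩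
        have hNz : N x y ≠ 0 := hNnz x y hgt
        have hN2 : 0 < N x y ^ 2 := by positivity
        have hterm : P x y ^ 2 / N x y ^ 2 ≤ ∑ p ∈ Sk1, P p.1 p.2 ^ 2 / N p.1 p.2 ^ 2 :=
          Finset.single_le_sum (f := fun p => P p.1 p.2 ^ 2 / N p.1 p.2 ^ 2)
            (fun p _ => by positivity) hmem
        have hCcge : (1 + P x y ^ 2 / N x y ^ 2) ≤ Cc := by
          rw [hCc]; linarith
        have hmul : (1 + P x y ^ 2 / N x y ^ 2) * N x y ^ 2 ≤ Cc * N x y ^ 2 :=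
          mul_le_mul_of_nonneg_right hCcge (le_of_lt hN2)
        have hcancel : (P x y ^ 2 / N x y ^ 2) * N x y ^ 2 = P x y ^ 2 :=
          div_mul_cancel₀ _ (ne_of_gt hN2)
        have h' := hmul
        rw [add_mul, one_mul, hcancel] at h'
        rw [hAxy]
        linarith
  -- rank bound
  have hk1 : ∀ (i i' : Fin k), (i : ℕ) + (i' : ℕ) < 2*k+1 := by
    intro i i'; have := i.isLt; have := i'.isLt; omega
  have hk2 : ∀ (i i' : Fin (k+1)), (i : ℕ) + (i' : ℕ) < 2*k+1 := by
    intro i i'; have := i.isLt; have := i'.isLt; omega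
  set Pp : MvPolynomial (Fin (2*k+1) ⊕ Fin (2*k+1)) ℝ :=
    Matrix.det (Matrix.of fun i i' : Fin k =>
      MvPolynomial.X (Sum.inl (⟨(i : ℕ) + (i' : ℕ), hk1 i i'⟩ : Fin (2*k+1))) -
      MvPolynomial.X (Sum.inr (⟨(i : ℕ) + (i' : ℕ), hk1 i i'⟩ : Fin (2*k+1)))) with hPp
  set Np : MvPolynomial (Fin (2*k+1) ⊕ Fin (2*k+1)) ℝ :=
    Matrix.det (Matrix.of fun i i' : Fin (k+1) =>
      MvPolynomial.X (Sum.inl (⟨(i : ℕ) + (i' : ℕ), hk2 i i'⟩ : Fin (2*k+1))) -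
      MvPolynomial.X (Sum.inr (⟨(i : ℕ) + (i' : ℕ), hk2 i i'⟩ : Fin (2*k+1)))) with hNp
  set F : MvPolynomial (Fin (2*k+1) ⊕ Fin (2*k+1)) ℝ :=
    Pp * Pp - MvPolynomial.C Cc * (Np * Np) - MvPolynomial.C μ with hFdef
  have hFev : ∀ x y : X, A x y =
      MvPolynomial.eval (Sum.elim (fun m => HDSR.af τ m x) (fun m => HDSR.af τ m y)) F := by
    intro x y
    have e1 := HDSR.eval_det τ x y k (2*k+1) hk1
    have e2 := HDSR.eval_det τ x y (k+1) (2*k+1) hk2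
    show P x y ^ 2 - Cc * N x y ^ 2 - μ = _
    rw [hFdef, map_sub, map_sub, _root_.map_mul, _root_.map_mul, _root_.map_mul,
      MvPolynomial.eval_C, MvPolynomial.eval_C, e1, e2]
    show P x y ^ 2 - Cc * N x y ^ 2 - μ = P x y * P x y - Cc * (N x y * N x y) - μ
    ring
  have hPdeg : Pp.totalDegree ≤ k := by
    rw [hPp]
    exact HDSR.det_totalDegree_le k _ (fun i i' => HDSR.tdeg_XsubX _ _)
  have hNdeg : Np.totalDegree ≤ k + 1 := by
    rw [hNp]
    exact HDSR.det_totalDegree_le (k+1) _ (fun i i' => HDSR.tdeg_XsubX _ _)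
  have hdeg : F.totalDegree ≤ 2*k+2 := by
    rw [hFdef]
    rw [sub_eq_add_neg, sub_eq_add_neg]
    refine le_trans (MvPolynomial.totalDegree_add _ _) ?_
    apply max_le
    · refine le_trans (MvPolynomial.totalDegree_add _ _) ?_
      apply max_le
      · refine le_trans (MvPolynomial.totalDegree_mul _ _) ?_
        omega
      · rw [MvPolynomial.totalDegree_neg]
        refine le_trans (MvPolynomial.totalDegree_mul _ _) ?_
        have h0 : (MvPolynomial.C Cc : MvPolynomial (Fin (2*k+1) ⊕ Fin (2*k+1)) ℝ).totalDegree = 0 :=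
          MvPolynomial.totalDegree_C _
        have h1 : (Np * Np).totalDegree ≤ 2*k+2 := by
          refine le_trans (MvPolynomial.totalDegree_mul _ _) ?_
          omega
        omega
    · rw [MvPolynomial.totalDegree_neg, MvPolynomial.totalDegree_C]
      omega
  have hrank : A.rank ≤ 2 ^ (4 * k + 4) := by
    have := HDSR.rank_le_of_poly (2*k+1) (2*k+2) A F (HDSR.af τ) (HDSR.af τ) hFev hdeg
    have harith : (2*k+1) + (2*k+2) + 1 = 4*k+4 := by ring
    rwa [harith] at this
  -- conclude
  have hmem : A.rank ∈ {r : ℕ | ∃ B : Matrix X X ℝ, B.rank = r ∧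
      ∀ i j, (HD n k i j = true → 0 < B i j) ∧ (HD n k i j = false → B i j < 0)} :=
    ⟨A, rfl, hsign⟩
  have h1 : signrank (HD n k) ≤ A.rank := Nat.sInf_le hmem
  have h2 : (2:ℕ) ^ (4 * k + 4) = 16 ^ (k+1) := by
    rw [show (16:ℕ) = 2^4 by norm_num, ← pow_mul]
    ring_nf
  have h3 : (16:ℕ) ^ (k+1) ≤ (1 + 16 ^ (k+1)) ^ 2 := by nlinarith [Nat.one_le_two_pow (n := 1)]
  omega
end

section
/- For all k ≤ n, the support-rank of HD_{≥k}^n satisfies suprank(HD_{≥k}^n) ≤ 4^k. -/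
open Matrix

/-- The support-rank of a boolean matrix: the minimum rank of a real matrix with
the same support. -/
noncomputable def suprank {I J : Type*} [Fintype J] (M : Matrix I J Bool) : ℕ :=
  sInf {r : ℕ | ∃ A : Matrix I J ℝ, A.rank = r ∧
    ∀ i j, A i j = 0 ↔ M i j = false}

/-- The ≥k-Hamming Distance matrix on n bits. -/
def HDge (n k : ℕ) : Matrix (Fin n → Bool) (Fin n → Bool) Bool :=
  Matrix.of fun x y => decide (k ≤ hammingDist x y)

/-!
Label each `x ∈ {0,1}ⁿ` by the `k × k` matrix `F x = V · diag(x) · Vᵀ`, for a `k × n` matrix `V`.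
Then `F x - F y = V · diag(x - y) · Vᵀ` has rank at most `dist(x, y)`, so its determinant vanishes
when `dist(x, y) < k`. When `dist(x, y) ≥ k`, a `V` selecting `k` coordinates where `x` and `y`
differ makes it nonzero; so the polynomial `det (X · diag(x - y) · Xᵀ)` in the entries of a generic
`X` is nonzero, and over the infinite field `ℝ` one `V` avoids the zeros of all these finitely many
polynomials at once. Hence `A(x, y) = det (F x - F y)` has the support of `HD_{≥k}`. Finally
`det (F x - F y) = det ([F x | 1] · [1; -F y])`, and by Cauchy–Binet a matrix of this shape has
rank at most `C(2k, k) ≤ 4 ^ k`.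
-/

theorem Matrix.rank_le_finrank_of_eq_linearMap_apply {K X Y W : Type*} [Field K] [Fintype Y]
    [AddCommGroup W] [Module K W] [FiniteDimensional K W] (A : Matrix X Y K)
    (L : W →ₗ[K] X → K) (w : Y → W) (h : ∀ x y, A x y = L (w y) x) :
    A.rank ≤ Module.finrank K W := by
  have hcols : Submodule.span K (Set.range A.col) ≤ LinearMap.range L := by
    rw [Submodule.span_le]
    rintro _ ⟨y, rfl⟩
    exact ⟨w y, funext fun x => (h x y).symm⟩
  rw [rank_eq_finrank_span_cols]
  exact (Submodule.finrank_mono hcols).trans (LinearMap.finrank_range_le L)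

/-- `det (U x * V y)` is the alternating form `c ↦ det (U x · c)` evaluated at the columns of
`V y`, so it depends on `y` only through their wedge product (Cauchy–Binet). -/
theorem Matrix.rank_of_det_mul_le_choose {K X Y ι : Type*} [Field K] [Fintype Y] [Fintype ι]
    {k : ℕ} (U : X → Matrix (Fin k) ι K) (V : Y → Matrix ι (Fin k) K) :
    (of fun x y => det (U x * V y)).rank ≤ (Fintype.card ι).choose k := by
  let ω : X → (ι → K) [⋀^Fin k]→ₗ[K] K := fun x =>
    detRowAlternating.compLinearMap (U x).mulVecLin
  have hω : ∀ x y, ω x (V y).col = det (U x * V y) := by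
    intro x y
    rw [← det_transpose]
    rfl
  calc _ ≤ Module.finrank K (⋀[K]^k (ι → K)) :=
        rank_le_finrank_of_eq_linearMap_apply _
          (LinearMap.pi fun x => exteriorPower.alternatingMapLinearEquiv (ω x))
          (fun y => exteriorPower.ιMulti K k (V y).col) fun x y => by
            rw [of_apply, LinearMap.pi_apply,
              exteriorPower.alternatingMapLinearEquiv_apply_ιMulti, hω]
    _ = _ := by rw [exteriorPower.finrank_eq, Module.finrank_fintype_fun_eq_card]

theorem Matrix.rank_of_det_sub_le_choose {K X Y : Type*} [Field K] [Fintype Y] {k : ℕ}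
    (F : X → Matrix (Fin k) (Fin k) K) (G : Y → Matrix (Fin k) (Fin k) K) :
    (of fun x y => det (F x - G y)).rank ≤ (k + k).choose k := by
  let U : X → Matrix (Fin k) (Fin k ⊕ Fin k) K := fun x => fromCols (F x) 1
  let W : Y → Matrix (Fin k ⊕ Fin k) (Fin k) K := fun y => fromRows 1 (-G y)
  have hUW : ∀ x y, U x * W y = F x - G y := fun x y => by
    simp [U, W, fromCols_mul_fromRows, sub_eq_add_neg]
  simpa [hUW] using rank_of_det_mul_le_choose U W

theorem MvPolynomial.exists_forall_eval_ne_zero {R σ D : Type*} [CommRing R] [IsDomain R]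
    [Infinite R] [Finite D] (p : D → MvPolynomial σ R) (hp : ∀ j, p j ≠ 0) :
    ∃ x : σ → R, ∀ j, eval x (p j) ≠ 0 := by
  have := Fintype.ofFinite D
  obtain ⟨x, hx⟩ : ∃ x, eval x (∏ j, p j) ≠ 0 := by
    by_contra! h
    exact Finset.prod_ne_zero_iff.mpr (fun j _ => hp j) (funext fun x => by simpa using h x)
  rw [map_prod] at hx
  exact ⟨x, fun j => Finset.prod_ne_zero_iff.mp hx j (Finset.mem_univ j)⟩

section DiagonalSandwich

variable {K ι m : Type*} [Field K] [Fintype ι] [DecidableEq ι] [Fintype m]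
  [DecidableEq m]

theorem Matrix.det_mul_diagonal_mul_eq_zero [DecidableEq K] (V : Matrix m ι K) (W : Matrix ι m K)
    {d : ι → K} (hd : Fintype.card {i // d i ≠ 0} < Fintype.card m) : det (V * diagonal d * W) = 0 := by
  by_contra h
  have hrank := rank_of_isUnit _ ((isUnit_iff_isUnit_det _).mpr (isUnit_iff_ne_zero.mpr h))
  have : (V * diagonal d * W).rank ≤ (diagonal d).rank :=
    (rank_mul_le_left _ _).trans (rank_mul_le_right _ _)
  rw [rank_diagonal, hrank] at this
  omega

theorem Matrix.exists_det_mul_diagonal_mul_transpose_ne_zero [DecidableEq K] {d : ι → K}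
    (hd : Fintype.card m ≤ Fintype.card {i // d i ≠ 0}) :
    ∃ V : Matrix m ι K, det (V * diagonal d * Vᵀ) ≠ 0 := by
  obtain ⟨c⟩ := Function.Embedding.nonempty_of_card_le hd
  let e : m → ι := fun a => c a
  have he : Function.Injective e := Subtype.val_injective.comp c.injective
  refine ⟨(1 : Matrix ι ι K).submatrix e id, ?_⟩
  have : (1 : Matrix ι ι K).submatrix e id * diagonal d * ((1 : Matrix ι ι K).submatrix e id)ᵀ
      = diagonal (d ∘ e) := by
    ext a b
    by_cases hab : a = b <;> simp [mul_apply, one_apply, diagonal, he.eq_iff, hab]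
  rw [this, det_diagonal]
  exact Finset.prod_ne_zero_iff.mpr fun a _ => (c a).2

theorem Matrix.exists_forall_det_mul_diagonal_mul_transpose_ne_zero [Infinite K] {D : Type*}
    [Finite D] (d : D → ι → K) (hd : ∀ j, ∃ V : Matrix m ι K, det (V * diagonal (d j) * Vᵀ) ≠ 0) :
    ∃ V : Matrix m ι K, ∀ j, det (V * diagonal (d j) * Vᵀ) ≠ 0 := by
  let X := mvPolynomialX m ι K
  let C : K →+* MvPolynomial (m × ι) K := MvPolynomial.C
  have heval : ∀ (V : Matrix m ι K) j,
      MvPolynomial.eval (fun p => V p.1 p.2) (det (X * diagonal (C ∘ d j) * Xᵀ))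
        = det (V * diagonal (d j) * Vᵀ) := by
    intro V j
    have hX : X.map (MvPolynomial.eval fun p => V p.1 p.2) = V := mvPolynomialX_map_eval₂ _ V
    rw [RingHom.map_det, RingHom.mapMatrix_apply, Matrix.map_mul, Matrix.map_mul, transpose_map,
      diagonal_map (map_zero _), hX]
    simp [C]
  obtain ⟨ρ, hρ⟩ := MvPolynomial.exists_forall_eval_ne_zero
    (fun j => det (X * diagonal (C ∘ d j) * Xᵀ)) fun j hP => by
      obtain ⟨V, hV⟩ := hd j
      exact hV (by rw [← heval, hP, map_zero])
  exact ⟨of fun a i => ρ (a, i), fun j => by rw [← heval]; exact hρ j⟩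

end DiagonalSandwich

theorem card_toNat_sub_ne_zero_eq_hammingDist {R ι : Type*} [Ring R] [Nontrivial R]
    [DecidableEq R] [Fintype ι] (x y : ι → Bool) :
    Fintype.card {i // ((x i).toNat : R) - (y i).toNat ≠ 0} = hammingDist x y := by
  rw [Fintype.card_subtype, hammingDist]
  congr 1
  ext i
  simp only [Finset.mem_filter, Finset.mem_univ, true_and]
  cases x i <;> cases y i <;> simp

theorem exists_det_sub_ne_zero_iff_le_hammingDist (K ι : Type*) [Field K] [Infinite K]
    [Fintype ι] (k : ℕ) :
    ∃ F : (ι → Bool) → Matrix (Fin k) (Fin k) K,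
      ∀ x y, det (F x - F y) ≠ 0 ↔ k ≤ hammingDist x y := by
  classical
  let e : (ι → Bool) → ι → K := fun x i => (x i).toNat
  have hcard : ∀ x y, Fintype.card {i // e x i - e y i ≠ 0} = hammingDist x y :=
    card_toNat_sub_ne_zero_eq_hammingDist
  obtain ⟨V, hV⟩ := exists_forall_det_mul_diagonal_mul_transpose_ne_zero (m := Fin k)
    (fun p : {p : (ι → Bool) × (ι → Bool) // k ≤ hammingDist p.1 p.2} => e p.1.1 - e p.1.2)
    fun p => exists_det_mul_diagonal_mul_transpose_ne_zero <| by
      rw [Fintype.card_fin]; exact p.2.trans_eq (hcard _ _).symm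
  refine ⟨fun x => V * diagonal (e x) * Vᵀ, fun x y => ?_⟩
  rw [← Matrix.sub_mul, ← Matrix.mul_sub, diagonal_sub]
  refine ⟨fun h => ?_, fun h => hV ⟨(x, y), h⟩⟩
  by_contra! hlt
  exact h (det_mul_diagonal_mul_eq_zero _ _ (by rwa [Fintype.card_fin, hcard]))

theorem stmt1_general (n k : ℕ) : suprank (HDge n k) ≤ 4 ^ k := by
  obtain ⟨F, hF⟩ := exists_det_sub_ne_zero_iff_le_hammingDist ℝ (Fin n) k
  calc suprank (HDge n k) ≤ (of fun x y => det (F x - F y)).rank :=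
        Nat.sInf_le ⟨_, rfl, fun x y => by simp [HDge, ← hF]⟩
    _ ≤ (k + k).choose k := rank_of_det_sub_le_choose F F
    _ ≤ 4 ^ k := by
      simpa [Nat.centralBinom_eq_two_mul_choose, two_mul] using Nat.centralBinom_le_four_pow k

theorem stmt1 (n k : ℕ) (hk : k ≤ n) : suprank (HDge n k) ≤ 4 ^ k :=
  stmt1_general n k
end

section
/- For all k ≤ n, the support-rank of HD_{≥k}^n satisfies suprank(HD_{≥k}^n) ≥ 2^k. -/
open Matrix

/-!
Embed `{0,1}^k` into `{0,1}^n` by padding with zeros, and pair each `u` with its complement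
`ū`. Distances are preserved by the padding and `dist(u, v̄) = k - dist(u, v)`, so the entry
of `HD_{≥k}^n` at `(u, v̄)` is nonzero exactly when `u = v`. Hence every real matrix with
this support contains a `2^k × 2^k` diagonal submatrix with nonzero diagonal, whose rank
is `2^k`.
-/

lemma le_suprank {I J : Type*} [Fintype J] {M : Matrix I J Bool} {r : ℕ}
    (h : ∀ A : Matrix I J ℝ, (∀ i j, A i j = 0 ↔ M i j = false) → r ≤ A.rank) :
    r ≤ suprank M := by
  apply le_csInf
  · refine ⟨_, Matrix.of fun i j => if M i j then (1 : ℝ) else 0, rfl, fun i j => ?_⟩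
    cases hM : M i j <;> simp [hM]
  · rintro _ ⟨A, rfl, hA⟩
    exact h A hA

lemma Matrix.IsDiag.rank_eq_card {ι K : Type*} [Fintype ι] [DecidableEq ι] [Field K]
    {B : Matrix ι ι K} (hB : B.IsDiag) (hdiag : ∀ i, B i i ≠ 0) :
    B.rank = Fintype.card ι := by
  classical
  rw [← hB.diagonal_diag, rank_diagonal]
  simp [hdiag]

lemma hammingDist_extend {ι κ β : Type*} [Fintype ι] [Fintype κ] [DecidableEq β]
    {φ : ι → κ} (hφ : φ.Injective) (x y : ι → β) (d : κ → β) :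
    hammingDist (Function.extend φ x d) (Function.extend φ y d) = hammingDist x y := by
  rw [hammingDist, hammingDist, ← Finset.card_map ⟨φ, hφ⟩]
  congr 1
  ext j
  by_cases hj : ∃ i, φ i = j
  · obtain ⟨i, rfl⟩ := hj
    simp [hφ.extend_apply]
  · push Not at hj
    simp [hj]

lemma card_le_hammingDist_iff {ι : Type*} {β : ι → Type*} [Fintype ι] [∀ i, DecidableEq (β i)]
    {x y : ∀ i, β i} : Fintype.card ι ≤ hammingDist x y ↔ ∀ i, x i ≠ y i := by
  rw [hammingDist_le_card_fintype.ge_iff_eq, hammingDist, ← Finset.card_univ,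
    Finset.card_filter_eq_iff]
  simp

lemma card_le_hammingDist_not_iff {ι : Type*} [Fintype ι] {x y : ι → Bool} :
    Fintype.card ι ≤ hammingDist x (fun i => !y i) ↔ x = y := by
  simp [card_le_hammingDist_iff, funext_iff]

theorem stmt2 (n k : ℕ) (hk : k ≤ n) : 2 ^ k ≤ suprank (HDge n k) := by
  refine le_suprank fun A hA => ?_
  let pad (u : Fin k → Bool) : Fin n → Bool := Function.extend (Fin.castLE hk) u fun _ => false
  let B : Matrix (Fin k → Bool) (Fin k → Bool) ℝ := A.submatrix pad fun v => pad fun i => !v i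
  have hB : ∀ u v, B u v ≠ 0 ↔ u = v := fun u v => by
    simpa [B, pad, hA, HDge, hammingDist_extend (Fin.castLE_injective hk)] using
      card_le_hammingDist_not_iff (x := u) (y := v)
  have hBdiag : B.IsDiag := fun u v huv => not_not.mp fun h => huv ((hB u v).mp h)
  calc 2 ^ k = Fintype.card (Fin k → Bool) := by simp
    _ = B.rank := (hBdiag.rank_eq_card fun u => (hB u u).mpr rfl).symm
    _ ≤ A.rank := rank_submatrix_le A _ _
end

section
/- Let q, r, N ∈ ℕ. For each t ∈ [q], let Q_t ∈ {0,1}^{N_t × N_t} be a boolean matrix with suprank(Q_t) ≤ r, and let a_t, b_t : [N] → [N_t] be arbitrary functions. Let Γ : {0,1}^q → {0,1}, and define the boolean matrix P ∈ {0,1}^{N×N} by P(i,j) = Γ(Q_1(a_1(i), b_1(j)), …, Q_q(a_q(i), b_q(j))). Then signrank(P) ≤ (1 + r²)^q. -/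
open Matrix

/-!
Pick real matrices `A t` of rank at most `r` with support `Q t` and put
`B t i j = A t (a t i) (b t j) ^ 2`: a nonnegative matrix of rank at most `r²` that is positive
exactly where `Q t (a t i) (b t j)` holds. For `S ⊆ [q]` the entrywise product
`F S = ∏ t ∈ S, B t` has rank at most `r ^ (2 |S|)`, and `F S i j ≠ 0` iff `S` is contained in the
pattern `σ i j = {t | Q t (a t i) (b t j)}`. In `C = ∑ S, ±M ^ |S| • F S`, with sign `+` iff
`Γ S`, the term `S = σ i j` dominates at `(i, j)` once `M` is large, so `C` sign-represents `P`,
while `rank C ≤ ∑ S, r ^ (2 |S|) = (1 + r²) ^ q`.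
-/

open Finset

namespace Matrix

variable {m n K : Type*} [Fintype n]

theorem rank_smul_le {R : Type*} [CommSemiring R] [StrongRankCondition R] [Fintype m]
    (c : R) (A : Matrix m n R) : (c • A).rank ≤ A.rank := by
  classical
  rw [smul_eq_diagonal_mul]
  exact rank_mul_le_right _ _

variable [Field K]

theorem rank_add_le (A B : Matrix m n K) : (A + B).rank ≤ A.rank + B.rank := by
  have hrange : LinearMap.range (A + B).mulVecLin ≤
      LinearMap.range A.mulVecLin ⊔ LinearMap.range B.mulVecLin := by
    rintro _ ⟨v, rfl⟩
    rw [mulVecLin_add]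
    exact Submodule.add_mem_sup (LinearMap.mem_range_self _ v) (LinearMap.mem_range_self _ v)
  exact (Submodule.finrank_mono hrange).trans (Submodule.finrank_add_le_finrank_add_finrank _ _)

theorem rank_sum_le {ι : Type*} (s : Finset ι) (A : ι → Matrix m n K) :
    (∑ i ∈ s, A i).rank ≤ ∑ i ∈ s, (A i).rank := by
  classical
  induction s using Finset.induction_on with
  | empty => simp
  | insert i s hi ih =>
    rw [sum_insert hi, sum_insert hi]
    exact (rank_add_le _ _).trans (Nat.add_le_add_left ih _)

variable [Fintype m]

theorem exists_rank_factorization (A : Matrix m n K) :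
    ∃ (U : Matrix m (Fin A.rank) K) (V : Matrix (Fin A.rank) n K), U * V = A := by
  let W := Submodule.span K (Set.range A.col)
  let e : Module.Basis (Fin A.rank) K W :=
    Module.finBasisOfFinrankEq K W (rank_eq_finrank_span_cols A).symm
  have hcol : ∀ j, A.col j ∈ W := fun j => Submodule.subset_span ⟨j, rfl⟩
  refine ⟨of fun i k => (e k : m → K) i, of fun k j => e.repr ⟨_, hcol j⟩ k, ?_⟩
  ext i j
  have hsum := congrArg (fun w : W => (w : m → K) i) (e.sum_repr ⟨_, hcol j⟩)
  simp only [AddSubmonoidClass.coe_finsetSum, SetLike.val_smul, Finset.sum_apply,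
    Pi.smul_apply, smul_eq_mul, col_apply] at hsum
  simp only [mul_apply, of_apply, ← hsum, mul_comm]

theorem rank_hadamard_le (A B : Matrix m n K) : (A ⊙ B).rank ≤ A.rank * B.rank := by
  obtain ⟨U, V, hUV⟩ := exists_rank_factorization A
  obtain ⟨U', V', hUV'⟩ := exists_rank_factorization B
  let X : Matrix m (Fin A.rank × Fin B.rank) K := of fun i kl => U i kl.1 * U' i kl.2
  let Y : Matrix (Fin A.rank × Fin B.rank) n K := of fun kl j => V kl.1 j * V' kl.2 j
  have hfac : (U * V) ⊙ (U' * V') = X * Y := by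
    ext i j
    simp only [X, Y, hadamard_apply, mul_apply, of_apply, sum_mul_sum, Fintype.sum_prod_type]
    exact sum_congr rfl fun _ _ => sum_congr rfl fun _ _ => by ring
  rw [hUV, hUV'] at hfac
  rw [hfac]
  simpa using (rank_mul_le_left X Y).trans (rank_le_card_width X)

theorem rank_of_prod_le {ι : Type*} (s : Finset ι) (A : ι → Matrix m n K) :
    (of fun i j => ∏ t ∈ s, A t i j).rank ≤ ∏ t ∈ s, (A t).rank := by
  classical
  induction s using Finset.induction_on with
  | empty =>
    simpa [vecMulVec] using rank_vecMulVec_le (fun _ : m => (1 : K)) (fun _ : n => (1 : K))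
  | insert t s ht ih =>
    have hsplit : (of fun i j => ∏ u ∈ insert t s, A u i j) =
        A t ⊙ of fun i j => ∏ u ∈ s, A u i j := by
      ext i j
      simp [prod_insert ht]
    rw [hsplit, prod_insert ht]
    exact (rank_hadamard_le _ _).trans (Nat.mul_le_mul_left _ ih)

end Matrix

theorem pos_mul_sum_of_dominant {S : Type*} [Fintype S] [DecidableEq S] {γ x : S → ℝ}
    {w : S → ℕ} {σ : S} {M : ℝ} (hγ : ∀ s, |γ s| = 1) (hx : ∀ s, 0 ≤ x s)
    (hw : ∀ s ≠ σ, x s ≠ 0 → w s < w σ) (hM : ∑ s, x s < M * x σ) :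
    0 < γ σ * ∑ s, γ s * M ^ w s * x s := by
  have hxσ : 0 < x σ := by
    refine (hx σ).lt_of_ne fun h => ?_
    rw [← h, mul_zero] at hM
    exact hM.not_ge (sum_nonneg fun s _ => hx s)
  have hM1 : 1 < M := by
    have := single_le_sum (fun s _ => hx s) (mem_univ σ)
    nlinarith
  have hM0 : 0 < M := by linarith
  have hrest : ∀ s ∈ univ.erase σ,
      -(M ^ w σ * x s) ≤ M * (γ σ * (γ s * M ^ w s * x s)) := by
    intro s hs
    have hpow : M * (M ^ w s * x s) ≤ M ^ w σ * x s := by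
      rcases eq_or_ne (x s) 0 with h | h
      · simp [h]
      · rw [← mul_assoc, ← pow_succ']
        exact mul_le_mul_of_nonneg_right
          (pow_le_pow_right₀ hM1.le (hw s (ne_of_mem_erase hs) h)) (hx s)
    have hγγ : -1 ≤ γ σ * γ s := by
      simpa [abs_mul, hγ] using neg_abs_le (γ σ * γ s)
    have hnn : 0 ≤ M * (M ^ w s * x s) := by have := hx s; positivity
    nlinarith
  have hγσ : γ σ * γ σ = 1 := by rw [← abs_mul_abs_self, hγ, one_mul]
  have hle : ∑ s ∈ univ.erase σ, x s ≤ ∑ s, x s :=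
    sum_le_sum_of_subset_of_nonneg (erase_subset _ _) fun s _ _ => hx s
  refine pos_of_mul_pos_right ?_ hM0.le
  calc 0 < M ^ w σ * (M * x σ - ∑ s ∈ univ.erase σ, x s) :=
        mul_pos (pow_pos hM0 _) (by linarith)
    _ = M * (γ σ * (γ σ * M ^ w σ * x σ)) + ∑ s ∈ univ.erase σ, -(M ^ w σ * x s) := by
        rw [sum_neg_distrib, ← mul_sum]
        linear_combination -(M * M ^ w σ * x σ) * hγσ
    _ ≤ M * (γ σ * (γ σ * M ^ w σ * x σ)) +
          ∑ s ∈ univ.erase σ, M * (γ σ * (γ s * M ^ w s * x s)) := by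
        gcongr with s hs
        exact hrest s hs
    _ = M * (γ σ * ∑ s, γ s * M ^ w s * x s) := by
        rw [← add_sum_erase univ _ (mem_univ σ), mul_add, mul_add, mul_sum, mul_sum]

noncomputable def boolSign (b : Bool) : ℝ := if b then 1 else -1

theorem abs_boolSign (b : Bool) : |boolSign b| = 1 := by
  cases b <;> simp [boolSign]

theorem exists_rank_eq_suprank {I J : Type*} [Fintype J] (M : Matrix I J Bool) :
    ∃ A : Matrix I J ℝ, A.rank = suprank M ∧ ∀ i j, A i j = 0 ↔ M i j = false :=
  Nat.sInf_mem (s := {r | ∃ A : Matrix I J ℝ, A.rank = r ∧ ∀ i j, A i j = 0 ↔ M i j = false})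
    ⟨_, of fun i j => if M i j then 1 else 0, rfl, fun i j => by cases h : M i j <;> simp [h]⟩

theorem signrank_le_rank {I J : Type*} [Fintype J] {M : Matrix I J Bool} (A : Matrix I J ℝ)
    (hA : ∀ i j, 0 < boolSign (M i j) * A i j) : signrank M ≤ A.rank := by
  refine Nat.sInf_le ⟨A, rfl, fun i j => ?_⟩
  have h := hA i j
  cases hM : M i j <;> simp_all [boolSign]

theorem signrank_le_sum_prod_rank {I J ι : Type*} [Fintype I] [Fintype J] [Fintype ι]
    [DecidableEq ι] (P : Matrix I J Bool) (B : ι → Matrix I J ℝ) (hB : ∀ t i j, 0 ≤ B t i j)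
    (Γ : Finset ι → Bool) (hP : ∀ i j, P i j = Γ {t | B t i j ≠ 0}) :
    signrank P ≤ ∑ S : Finset ι, ∏ t ∈ S, (B t).rank := by
  let F : Finset ι → Matrix I J ℝ := fun S => of fun i j => ∏ t ∈ S, B t i j
  let σ : I → J → Finset ι := fun i j => {t | B t i j ≠ 0}
  have hF_nonneg : ∀ S i j, 0 ≤ F S i j := fun S i j => prod_nonneg fun t _ => hB t i j
  have hF_ne_zero : ∀ S i j, F S i j ≠ 0 ↔ S ⊆ σ i j := by
    intro S i j
    simp [F, σ, prod_ne_zero_iff, subset_iff]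
  have hF_pos : ∀ i j, 0 < F (σ i j) i j := fun i j =>
    (hF_nonneg _ i j).lt_of_ne' ((hF_ne_zero _ i j).2 subset_rfl)
  have hM_ev : ∀ p : I × J, ∀ᶠ M : ℝ in Filter.atTop,
      ∑ S, F S p.1 p.2 < M * F (σ p.1 p.2) p.1 p.2 := fun p =>
    (Filter.tendsto_id.atTop_mul_const (hF_pos p.1 p.2)).eventually_gt_atTop _
  obtain ⟨M, hM⟩ := (Filter.eventually_all.2 hM_ev).exists
  let C := ∑ S, (boolSign (Γ S) * M ^ S.card) • F S
  calc signrank P ≤ C.rank := signrank_le_rank C fun i j => by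
        simp only [hP, C, Matrix.sum_apply, Matrix.smul_apply, smul_eq_mul]
        exact pos_mul_sum_of_dominant (fun S => abs_boolSign _) (fun S => hF_nonneg S i j)
          (fun S hS hne => card_lt_card (ssubset_of_subset_of_ne ((hF_ne_zero S i j).1 hne) hS))
          (hM (i, j))
    _ ≤ ∑ S, (F S).rank := (rank_sum_le _ _).trans (sum_le_sum fun S _ => rank_smul_le _ _)
    _ ≤ _ := sum_le_sum fun S _ => rank_of_prod_le S B

theorem stmt3 (q r N : ℕ) (Nt : Fin q → ℕ)
    (Q : ∀ t, Matrix (Fin (Nt t)) (Fin (Nt t)) Bool)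
    (hQ : ∀ t, suprank (Q t) ≤ r)
    (a b : ∀ t, Fin N → Fin (Nt t))
    (Γ : (Fin q → Bool) → Bool)
    (P : Matrix (Fin N) (Fin N) Bool)
    (hP : ∀ i j, P i j = Γ (fun t => Q t (a t i) (b t j))) :
    signrank P ≤ (1 + r ^ 2) ^ q := by
  choose A hA_rank hA_supp using fun t => exists_rank_eq_suprank (Q t)
  let B : Fin q → Matrix (Fin N) (Fin N) ℝ := fun t => (A t ⊙ A t).submatrix (a t) (b t)
  have hB_rank : ∀ t, (B t).rank ≤ r ^ 2 := fun t =>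
    (rank_submatrix_le _ _ _).trans <| (rank_hadamard_le _ _).trans <| by
      rw [sq, hA_rank]
      exact Nat.mul_le_mul (hQ t) (hQ t)
  have hB_ne_zero : ∀ t i j, B t i j ≠ 0 ↔ Q t (a t i) (b t j) = true := by
    intro t i j
    simp [B, hA_supp]
  calc signrank P ≤ ∑ S : Finset (Fin q), ∏ t ∈ S, (B t).rank :=
        signrank_le_sum_prod_rank P B (fun t i j => mul_self_nonneg _)
          (fun S => Γ fun t => decide (t ∈ S)) fun i j => by
            simp [hP, hB_ne_zero]
    _ ≤ ∑ S : Finset (Fin q), (r ^ 2) ^ S.card :=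
        sum_le_sum fun S _ => prod_le_pow_card _ _ _ fun t _ => hB_rank t
    _ = (1 + r ^ 2) ^ q := by
        rw [add_comm]
        simpa using Fin.sum_pow_mul_eq_add_pow (n := q) (r ^ 2) 1
end

section
/- (Veronese map) Let M ∈ {0,1}^{N×N} be a boolean matrix, let P be a real polynomial in 2m variables (i.e. a multivariate polynomial over ℝ with variables indexed by Fin m ⊕ Fin m), and let α, β : [N] → ℝ^m be functions such that for all i,j ∈ [N]: M(i,j) = 0 if and only if P(α(i), β(j)) = 0, where P is evaluated with its first m variables set to α(i) and its last m variables set to β(j). Then suprank(M) is at most the number of monomials of P with nonzero coefficient. -/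
open Matrix

theorem stmt5 (N m : ℕ) (M : Matrix (Fin N) (Fin N) Bool)
    (P : MvPolynomial (Fin m ⊕ Fin m) ℝ)
    (α β : Fin N → Fin m → ℝ)
    (h : ∀ i j, M i j = false ↔ MvPolynomial.eval (Sum.elim (α i) (β j)) P = 0) :
    suprank M ≤ P.support.card := by
  set A : Matrix (Fin N) (Fin N) ℝ :=
    fun i j => MvPolynomial.eval (Sum.elim (α i) (β j)) P with hA
  have hmem : A.rank ∈ {r : ℕ | ∃ A : Matrix (Fin N) (Fin N) ℝ, A.rank = r ∧
      ∀ i j, A i j = 0 ↔ M i j = false} := ⟨A, rfl, fun i j => ⟨(h i j).2, (h i j).1⟩⟩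
  refine le_trans (Nat.sInf_le hmem) ?_
  -- factor A = B * C
  set B : Matrix (Fin N) {d // d ∈ P.support} ℝ :=
    fun i d => P.coeff d.1 * ∏ k : Fin m, α i k ^ d.1 (Sum.inl k) with hB
  set C : Matrix {d // d ∈ P.support} (Fin N) ℝ :=
    fun d j => ∏ k : Fin m, β j k ^ d.1 (Sum.inr k) with hC
  have hfac : A = B * C := by
    ext i j
    simp only [hA, Matrix.mul_apply, hB, hC, MvPolynomial.eval_eq']
    rw [← Finset.sum_attach P.support
      (fun d => P.coeff d * ∏ k, Sum.elim (α i) (β j) k ^ d k)]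
    refine Finset.sum_congr rfl fun d _ => ?_
    rw [Fintype.prod_sum_type]
    simp [mul_assoc]
  calc A.rank ≤ B.rank := hfac ▸ Matrix.rank_mul_le_left B C
    _ ≤ Fintype.card {d // d ∈ P.support} := Matrix.rank_le_card_width B
    _ = P.support.card := Fintype.card_coe _
end

section
/- For all n ∈ ℕ and all real n×n matrices A and B, det(A+B) = Σ_{α,β ⊆ [n], |α|=|β|} (−1)^{s(α)+s(β)} · det(A|_{α×β}) · det(B|_{ᾱ×β̄}), where the sum ranges over all pairs of subsets α, β of [n] of equal cardinality, s(·) denotes the sum of the elements of a subset, ᾱ and β̄ denote complements in [n], and A|_{α×β} denotes the square submatrix of A whose rows are indexed by α and columns by β, each listed in increasing order. -/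
open Matrix Finset Equiv

namespace Stmt7Aux

variable {n m mc : ℕ}

lemma swap_image (a b : Fin n) (s : Finset (Fin n)) (ha : a ∈ s) (hb : b ∉ s) :
    s.image (Equiv.swap a b) = insert b (s.erase a) := by
  ext x
  simp only [mem_image, mem_insert, mem_erase]
  constructor
  · rintro ⟨y, hy, rfl⟩
    rcases eq_or_ne y a with rfl | hya
    · left; simp
    · right
      rw [Equiv.swap_apply_of_ne_of_ne hya (by rintro rfl; exact hb hy)]
      exact ⟨hya, hy⟩
  · rintro (rfl | ⟨hxa, hxs⟩)
    · exact ⟨a, ha, by simp⟩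
    · exact ⟨x, hxs, Equiv.swap_apply_of_ne_of_ne hxa (by rintro rfl; exact hb hxs)⟩

lemma compl_image_perm (e : Equiv.Perm (Fin n)) (s : Finset (Fin n)) :
    (s.image e)ᶜ = sᶜ.image e := by
  ext x
  simp only [mem_compl, mem_image, not_exists, not_and]
  constructor
  · intro h
    exact ⟨e.symm x, fun hs => (h _ hs (e.apply_symm_apply x)).elim, e.apply_symm_apply x⟩
  · rintro ⟨y, hy, rfl⟩ z hz hez
    exact hy (e.injective hez ▸ hz)

lemma orderEmbOfFin_swap {m : ℕ} {s t : Finset (Fin n)} (hs : s.card = m) (ht : t.card = m)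
    (a b : Fin n) (hab : (b : ℕ) = (a : ℕ) + 1) (hmem : a ∈ s ↔ b ∉ s)
    (himg : t = s.image (Equiv.swap a b)) (k : Fin m) :
    t.orderEmbOfFin ht k = Equiv.swap a b (s.orderEmbOfFin hs k) := by
  have key : (fun k => Equiv.swap a b (s.orderEmbOfFin hs k)) = t.orderEmbOfFin ht := by
    apply Finset.orderEmbOfFin_unique
    · intro x
      rw [himg]
      exact mem_image_of_mem _ (s.orderEmbOfFin_mem hs x)
    · intro i j hij
      show Equiv.swap a b (s.orderEmbOfFin hs i) < Equiv.swap a b (s.orderEmbOfFin hs j)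
      obtain ⟨x, hX⟩ : ∃ x, s.orderEmbOfFin hs i = x := ⟨_, rfl⟩
      obtain ⟨y, hY⟩ : ∃ y, s.orderEmbOfFin hs j = y := ⟨_, rfl⟩
      have hx : x ∈ s := hX ▸ s.orderEmbOfFin_mem hs i
      have hy : y ∈ s := hY ▸ s.orderEmbOfFin_mem hs j
      have hxy : (x : ℕ) < (y : ℕ) := by
        rw [← hX, ← hY]; exact (s.orderEmbOfFin hs).strictMono hij
      rw [hX, hY]
      rcases eq_or_ne x a with hxa | hxa
      · have hxv : (x : ℕ) = (a : ℕ) := congrArg Fin.val hxa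
        have hbs : b ∉ s := hmem.mp (by rwa [hxa] at hx)
        have hyb : y ≠ b := fun h => hbs (h ▸ hy)
        have hybv : (y : ℕ) ≠ (b : ℕ) := fun h => hyb (Fin.ext h)
        have hya : y ≠ a := fun h => by rw [congrArg Fin.val h] at hxy; omega
        rw [hxa, Equiv.swap_apply_left, Equiv.swap_apply_of_ne_of_ne hya hyb]
        exact Fin.lt_def.mpr (by omega)
      · rcases eq_or_ne x b with hxb | hxb
        · have hxv : (x : ℕ) = (b : ℕ) := congrArg Fin.val hxb
          have has : a ∉ s := fun h => (hmem.mp h) (hxb ▸ hx)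
          have hya : y ≠ a := fun h => has (h ▸ hy)
          have hyb : y ≠ b := fun h => by rw [congrArg Fin.val h] at hxy; omega
          rw [hxb, Equiv.swap_apply_right, Equiv.swap_apply_of_ne_of_ne hya hyb]
          exact Fin.lt_def.mpr (by omega)
        · have hxav : (x : ℕ) ≠ (a : ℕ) := fun h => hxa (Fin.ext h)
          have hxbv : (x : ℕ) ≠ (b : ℕ) := fun h => hxb (Fin.ext h)
          rw [Equiv.swap_apply_of_ne_of_ne hxa hxb]
          rcases eq_or_ne y a with hya | hya
          · have hyv := congrArg Fin.val hya
            rw [hya, Equiv.swap_apply_left]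
            exact Fin.lt_def.mpr (by omega)
          · rcases eq_or_ne y b with hyb | hyb
            · have hyv := congrArg Fin.val hyb
              rw [hyb, Equiv.swap_apply_right]
              exact Fin.lt_def.mpr (by omega)
            · rw [Equiv.swap_apply_of_ne_of_ne hya hyb]
              exact Fin.lt_def.mpr hxy
  exact (congrFun key k).symm


def embE (s : Finset (Fin n)) (h : s.card = m) (h' : sᶜ.card = mc) :
    Fin m ⊕ Fin mc ≃ Fin n :=
  (Equiv.sumCongr (s.orderIsoOfFin h).toEquiv ((sᶜ.orderIsoOfFin h').toEquiv)).trans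
    ((Equiv.sumCongr (Equiv.refl _)
      (Equiv.subtypeEquivRight (fun x => Finset.mem_compl))).trans
      (Equiv.sumCompl (· ∈ s)))

@[simp] lemma embE_inl (s : Finset (Fin n)) (h : s.card = m) (h' : sᶜ.card = mc) (k : Fin m) :
    embE s h h' (Sum.inl k) = s.orderEmbOfFin h k := rfl

@[simp] lemma embE_inr (s : Finset (Fin n)) (h : s.card = m) (h' : sᶜ.card = mc) (k : Fin mc) :
    embE s h h' (Sum.inr k) = sᶜ.orderEmbOfFin h' k := rfl

def shuffle (α β : Finset (Fin n)) (hα : α.card = m) (hβ : β.card = m)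
    (hα' : αᶜ.card = mc) (hβ' : βᶜ.card = mc) : Equiv.Perm (Fin n) :=
  (embE β hβ hβ').symm.trans (embE α hα hα')

lemma shuffle_mul (α β γ : Finset (Fin n)) (hα hβ hγ) (hα' hβ' hγ') :
    shuffle (n := n) (m := m) (mc := mc) α γ hα hγ hα' hγ' * shuffle γ β hγ hβ hγ' hβ' =
      shuffle α β hα hβ hα' hβ' := by
  ext x
  simp [shuffle, Equiv.Perm.mul_apply]

lemma shuffle_inv (α β : Finset (Fin n)) (hα hβ) (hα' hβ') :
    (shuffle (n := n) (m := m) (mc := mc) α β hα hβ hα' hβ')⁻¹ =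
      shuffle β α hβ hα hβ' hα' := by
  ext x
  simp [shuffle, Equiv.Perm.inv_def]

lemma shuffle_self (β : Finset (Fin n)) (hβ : β.card = m) (hβ' : βᶜ.card = mc) :
    shuffle β β hβ hβ hβ' hβ' = 1 := by
  ext x
  simp [shuffle]


lemma shuffle_move {α β t : Finset (Fin n)} (hα : α.card = m) (hβ : β.card = m)
    (hα' : αᶜ.card = mc) (hβ' : βᶜ.card = mc) (a b : Fin n)
    (hab : (b : ℕ) = (a : ℕ) + 1) (hmem : a ∈ α ↔ b ∉ α)
    (ht : t = α.image (Equiv.swap a b)) (h2 : t.card = m) (h2' : tᶜ.card = mc) :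
    shuffle t β h2 hβ h2' hβ' = Equiv.swap a b * shuffle α β hα hβ hα' hβ' := by
  apply Equiv.ext
  intro x
  obtain ⟨y, rfl⟩ := (embE β hβ hβ').surjective x
  rcases y with k | k
  · simp only [shuffle, Equiv.Perm.mul_apply, Equiv.trans_apply, Equiv.symm_apply_apply]
    rw [embE_inl, embE_inl]
    exact orderEmbOfFin_swap hα h2 a b hab hmem ht k
  · simp only [shuffle, Equiv.Perm.mul_apply, Equiv.trans_apply, Equiv.symm_apply_apply]
    rw [embE_inr, embE_inr]
    refine orderEmbOfFin_swap hα' h2' a b hab ?_ ?_ k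
    · simp only [Finset.mem_compl]; tauto
    · rw [ht, compl_image_perm]

def base (hm : m ≤ n) : Finset (Fin n) := Finset.univ.map (Fin.castLEEmb hm)

lemma mem_base (hm : m ≤ n) (x : Fin n) : x ∈ base hm ↔ (x : ℕ) < m := by
  simp only [base, Finset.mem_map, Finset.mem_univ, true_and]
  constructor
  · rintro ⟨k, rfl⟩; exact k.2
  · intro hx; exact ⟨⟨x, hx⟩, Fin.ext rfl⟩

lemma card_base (hm : m ≤ n) : (base hm).card = m := by
  simp [base]


lemma exists_move (α : Finset (Fin n)) (hα : α.card = m) (hm : m ≤ n)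
    (hne : α ≠ base hm) : ∃ a b : Fin n, (b : ℕ) = (a : ℕ) + 1 ∧ b ∈ α ∧ a ∉ α := by
  by_contra hcon
  push_neg at hcon
  have hstep : ∀ v : ℕ, ∀ hv : v + 1 < n, (⟨v + 1, hv⟩ : Fin n) ∈ α →
      (⟨v, by omega⟩ : Fin n) ∈ α := by
    intro v hv hb
    by_contra hav
    exact hav (hcon ⟨v, by omega⟩ ⟨v + 1, hv⟩ rfl hb)
  have key : ∀ v : ℕ, ∀ x : Fin n, x ∈ α → (x : ℕ) = v →
      ∀ k : ℕ, ∀ hk : k < n, k ≤ v → (⟨k, hk⟩ : Fin n) ∈ α := by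
    intro v
    induction v using Nat.strong_induction_on with
    | _ v ih =>
      intro x hx hxv k hk hkv
      rcases eq_or_lt_of_le hkv with rfl | hk'
      · have : x = (⟨k, hk⟩ : Fin n) := Fin.ext hxv
        exact this ▸ hx
      · rcases Nat.exists_eq_succ_of_ne_zero (by omega : v ≠ 0) with ⟨v', rfl⟩
        have hvn : v' + 1 < n := by omega
        have hx' : (⟨v' + 1, hvn⟩ : Fin n) ∈ α := by
          have : x = (⟨v' + 1, hvn⟩ : Fin n) := Fin.ext hxv
          exact this ▸ hx
        have hpred : (⟨v', by omega⟩ : Fin n) ∈ α := hstep v' hvn hx'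
        exact ih v' (by omega) _ hpred rfl k hk (by omega)
  -- α is downward closed, hence α = base hm
  have hsub : α ⊆ base hm := by
    intro x hx
    rw [mem_base]
    by_contra hxm
    push_neg at hxm
    -- the set {0,...,x} ⊆ α has card x+1 > m
    have hS : ((Finset.range ((x : ℕ) + 1)).attachFin
        (fun k hk => by simp at hk; omega)) ⊆ α := by
      intro y hy
      simp only [Finset.mem_attachFin, Finset.mem_range] at hy
      have := key (x : ℕ) x hx rfl (y : ℕ) y.isLt (by omega)
      simpa using this
    have hcard := Finset.card_le_card hS
    rw [Finset.card_attachFin, Finset.card_range, hα] at hcard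
    omega
  exact hne (Finset.eq_of_subset_of_card_le hsub (by rw [card_base, ← hα]))

lemma sum_move (α t : Finset (Fin n)) (a b : Fin n) (hab : (b : ℕ) = (a : ℕ) + 1)
    (hb : b ∈ α) (ha : a ∉ α) (ht : t = α.image (Equiv.swap a b)) :
    (∑ i ∈ t, (i : ℕ)) + 1 = ∑ i ∈ α, (i : ℕ) := by
  have himg : t = insert a (α.erase b) := by
    rw [ht, Equiv.swap_comm]; exact swap_image b a α hb ha
  have hnotmem : a ∉ α.erase b := fun h => ha (Finset.mem_of_mem_erase h)
  have h1 : (∑ i ∈ t, (i : ℕ)) = (a : ℕ) + ∑ i ∈ α.erase b, (i : ℕ) := by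
    rw [himg, Finset.sum_insert hnotmem]
  have h2 : (b : ℕ) + ∑ i ∈ α.erase b, (i : ℕ) = ∑ i ∈ α, (i : ℕ) :=
    Finset.add_sum_erase _ _ hb
  omega

lemma sign_shuffle_base (hm : m ≤ n) (hb : (base hm).card = m) (hb' : (base hm)ᶜ.card = mc)
    (N : ℕ) : ∀ (α : Finset (Fin n)) (hα : α.card = m) (hα' : αᶜ.card = mc),
    (∑ i ∈ α, (i : ℕ)) = N →
    Equiv.Perm.sign (shuffle α (base hm) hα hb hα' hb') =
      (-1) ^ (N + ∑ i ∈ base hm, (i : ℕ)) := by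
  induction N using Nat.strong_induction_on with
  | _ N ih =>
    intro α hα hα' hN
    rcases eq_or_ne α (base hm) with rfl | hne
    · rw [shuffle_self (base hm) hα hα', Equiv.Perm.sign_one]
      rw [← hN]
      exact (Even.neg_one_pow ⟨_, rfl⟩).symm
    · obtain ⟨a, b, hab, hbα, haα⟩ := exists_move α hα hm hne
      set t := α.image (Equiv.swap a b) with ht
      have htc : t.card = m := by
        rw [ht, Finset.card_image_of_injective _ (Equiv.swap a b).injective, hα]
      have htc' : tᶜ.card = mc := by
        rw [ht, compl_image_perm, Finset.card_image_of_injective _ (Equiv.swap a b).injective,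
          hα']
      have hmove := shuffle_move hα hb hα' hb' a b hab
        (by constructor <;> intro h <;> [exact absurd h haα; exact absurd hbα h]) ht htc htc'
      have hsum := sum_move α t a b hab hbα haα ht
      have hab' : a ≠ b := fun h => by rw [h] at hab; omega
      have hNpos : 1 ≤ N := by
        have : (b : ℕ) ≤ ∑ i ∈ α, (i : ℕ) := Finset.single_le_sum (fun i _ => Nat.zero_le _) hbα
        omega
      have hIH := ih (N - 1) (by omega) t htc htc' (by omega)
      have : shuffle α (base hm) hα hb hα' hb' =
          Equiv.swap a b * shuffle t (base hm) htc hb htc' hb' := by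
        rw [hmove, ← mul_assoc, Equiv.swap_mul_self, one_mul]
      rw [this, Equiv.Perm.sign_mul, Equiv.Perm.sign_swap hab', hIH]
      have hexp : N + (∑ i ∈ base hm, (i : ℕ)) = (N - 1 + ∑ i ∈ base hm, (i : ℕ)) + 1 := by
        omega
      rw [hexp, pow_succ]
      rw [mul_comm]

lemma sign_shuffle (α β : Finset (Fin n)) (hα : α.card = m) (hβ : β.card = m)
    (hα' : αᶜ.card = mc) (hβ' : βᶜ.card = mc) :
    Equiv.Perm.sign (shuffle α β hα hβ hα' hβ') =
      (-1) ^ ((∑ i ∈ α, (i : ℕ)) + ∑ i ∈ β, (i : ℕ)) := by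
  have hm : m ≤ n := by
    rw [← hα]
    simpa using Finset.card_le_univ α
  have hb : (base hm).card = m := card_base hm
  have hb' : (base hm)ᶜ.card = mc := by
    rw [Finset.card_compl, hb, ← hα, ← Finset.card_compl]
    exact hα' 
  have h1 := sign_shuffle_base hm hb hb' _ α hα hα' rfl
  have h2 := sign_shuffle_base hm hb hb' _ β hβ hβ' rfl
  have hcomp : shuffle α β hα hβ hα' hβ' =
      shuffle α (base hm) hα hb hα' hb' * shuffle (base hm) β hb hβ hb' hβ' :=
    (shuffle_mul α β (base hm) hα hβ hb hα' hβ' hb').symm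
  have hinv : shuffle (base hm) β hb hβ hb' hβ' =
      (shuffle β (base hm) hβ hb hβ' hb')⁻¹ := (shuffle_inv β (base hm) hβ hb hβ' hb').symm
  rw [hcomp, Equiv.Perm.sign_mul, h1, hinv, Equiv.Perm.sign_inv, h2]
  rw [← pow_add]
  have hexp : (∑ i ∈ α, (i : ℕ)) + (∑ i ∈ base hm, (i : ℕ)) +
      ((∑ i ∈ β, (i : ℕ)) + ∑ i ∈ base hm, (i : ℕ)) =
      ((∑ i ∈ α, (i : ℕ)) + ∑ i ∈ β, (i : ℕ)) + 2 * ∑ i ∈ base hm, (i : ℕ) := by omega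
  rw [hexp, pow_add, pow_mul]
  norm_num


def mix (α β : Finset (Fin n)) (hα : α.card = m) (hβ : β.card = m)
    (hα' : αᶜ.card = mc) (hβ' : βᶜ.card = mc)
    (τ : Equiv.Perm (Fin m)) (ρ : Equiv.Perm (Fin mc)) : Equiv.Perm (Fin n) :=
  (embE β hβ hβ').symm.trans ((Equiv.sumCongr τ ρ).trans (embE α hα hα'))

lemma mix_apply_left (α β : Finset (Fin n)) (hα hβ hα' hβ') (τ : Equiv.Perm (Fin m))
    (ρ : Equiv.Perm (Fin mc)) (k : Fin m) :
    mix α β hα hβ hα' hβ' τ ρ (β.orderEmbOfFin hβ k) = α.orderEmbOfFin hα (τ k) := by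
  have h1 : β.orderEmbOfFin hβ k = embE β hβ hβ' (Sum.inl k) := rfl
  simp only [mix, Equiv.trans_apply, Equiv.sumCongr_apply]
  rw [h1, Equiv.symm_apply_apply]
  rfl

lemma mix_apply_right (α β : Finset (Fin n)) (hα hβ hα' hβ') (τ : Equiv.Perm (Fin m))
    (ρ : Equiv.Perm (Fin mc)) (k : Fin mc) :
    mix α β hα hβ hα' hβ' τ ρ (βᶜ.orderEmbOfFin hβ' k) = αᶜ.orderEmbOfFin hα' (ρ k) := by
  have h1 : βᶜ.orderEmbOfFin hβ' k = embE β hβ hβ' (Sum.inr k) := rfl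
  simp only [mix, Equiv.trans_apply, Equiv.sumCongr_apply]
  rw [h1, Equiv.symm_apply_apply]
  rfl

lemma sign_mix (α β : Finset (Fin n)) (hα hβ hα' hβ') (τ : Equiv.Perm (Fin m))
    (ρ : Equiv.Perm (Fin mc)) :
    Equiv.Perm.sign (mix α β hα hβ hα' hβ' τ ρ) =
      (-1) ^ ((∑ i ∈ α, (i : ℕ)) + ∑ i ∈ β, (i : ℕ)) *
        (Equiv.Perm.sign τ * Equiv.Perm.sign ρ) := by
  have hdecomp : mix α β hα hβ hα' hβ' τ ρ =
      shuffle α β hα hβ hα' hβ' * (embE β hβ hβ').permCongr (Equiv.sumCongr τ ρ) := by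
    apply Equiv.ext
    intro x
    simp only [mix, shuffle, Equiv.Perm.mul_apply, Equiv.trans_apply, Equiv.permCongr_apply,
      Equiv.symm_apply_apply]
  rw [hdecomp, Equiv.Perm.sign_mul, sign_shuffle, Equiv.Perm.sign_permCongr,
    Equiv.Perm.sign_sumCongr]

lemma mix_image (α β : Finset (Fin n)) (hα : α.card = m) (hβ : β.card = m) (hα' hβ')
    (τ : Equiv.Perm (Fin m)) (ρ : Equiv.Perm (Fin mc)) :
    β.image (mix α β hα hβ hα' hβ' τ ρ) = α := by
  apply Finset.eq_of_subset_of_card_le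
  · intro x hx
    rw [Finset.mem_image] at hx
    obtain ⟨y, hy, rfl⟩ := hx
    have : y ∈ Set.range (β.orderEmbOfFin hβ) := by
      rw [Finset.range_orderEmbOfFin]; exact hy
    obtain ⟨k, rfl⟩ := this
    rw [mix_apply_left]
    exact α.orderEmbOfFin_mem hα _
  · rw [Finset.card_image_of_injective _ (mix α β hα hβ hα' hβ' τ ρ).injective, hα, hβ]

lemma prod_finset_eq {M : Type*} [CommMonoid M] (s : Finset (Fin n)) (h : s.card = m)
    (g : Fin n → M) : ∏ i ∈ s, g i = ∏ k : Fin m, g (s.orderEmbOfFin h k) := by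
  have hmap : s = Finset.map (s.orderEmbOfFin h).toEmbedding Finset.univ := by
    ext x
    simp only [Finset.mem_map, Finset.mem_univ, true_and, RelEmbedding.coe_toEmbedding]
    constructor
    · intro hx
      have : x ∈ Set.range (s.orderEmbOfFin h) := by
        rw [Finset.range_orderEmbOfFin]; exact hx
      exact this
    · rintro ⟨k, rfl⟩
      exact s.orderEmbOfFin_mem h k
  conv_lhs => rw [hmap]
  rw [Finset.prod_map]
  rfl

lemma fiber_eq_image (α β : Finset (Fin n)) (hα : α.card = m) (hβ : β.card = m)
    (hα' : αᶜ.card = mc) (hβ' : βᶜ.card = mc) :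
    Finset.univ.filter (fun σ : Equiv.Perm (Fin n) => β.image σ = α) =
      Finset.image (fun p : Equiv.Perm (Fin m) × Equiv.Perm (Fin mc) =>
        mix α β hα hβ hα' hβ' p.1 p.2) Finset.univ := by
  ext σ
  simp only [Finset.mem_filter, Finset.mem_univ, true_and, Finset.mem_image]
  constructor
  · intro hσ
    have hmem1 : ∀ k : Fin m, σ (β.orderEmbOfFin hβ k) ∈ α := fun k => by
      rw [← hσ]; exact Finset.mem_image_of_mem σ (β.orderEmbOfFin_mem hβ k)
    have hmem2 : ∀ k : Fin mc, σ (βᶜ.orderEmbOfFin hβ' k) ∈ αᶜ := fun k => by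
      rw [Finset.mem_compl]
      intro hmem
      rw [← hσ, Finset.mem_image] at hmem
      obtain ⟨y, hy, hyy⟩ := hmem
      have : y = βᶜ.orderEmbOfFin hβ' k := σ.injective hyy
      rw [this] at hy
      exact absurd hy (Finset.mem_compl.mp (βᶜ.orderEmbOfFin_mem hβ' k))
    set tfun : Fin m → Fin m :=
      fun k => (α.orderIsoOfFin hα).symm ⟨σ (β.orderEmbOfFin hβ k), hmem1 k⟩ with htfun
    set rfun : Fin mc → Fin mc :=
      fun k => (αᶜ.orderIsoOfFin hα').symm ⟨σ (βᶜ.orderEmbOfFin hβ' k), hmem2 k⟩ with hrfun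
    have tinj : Function.Injective tfun := by
      intro k l hkl
      simp only [htfun] at hkl
      have := (α.orderIsoOfFin hα).symm.injective hkl
      have := σ.injective (congrArg Subtype.val this)
      exact (β.orderEmbOfFin hβ).injective this
    have rinj : Function.Injective rfun := by
      intro k l hkl
      simp only [hrfun] at hkl
      have := (αᶜ.orderIsoOfFin hα').symm.injective hkl
      have := σ.injective (congrArg Subtype.val this)
      exact (βᶜ.orderEmbOfFin hβ').injective this
    refine ⟨⟨Equiv.ofBijective tfun (Finite.injective_iff_bijective.mp tinj),
      Equiv.ofBijective rfun (Finite.injective_iff_bijective.mp rinj)⟩, ?_⟩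
    apply Equiv.ext
    intro x
    obtain ⟨y, rfl⟩ := (embE β hβ hβ').surjective x
    rcases y with k | k
    · rw [show embE β hβ hβ' (Sum.inl k) = β.orderEmbOfFin hβ k from rfl, mix_apply_left]
      show α.orderEmbOfFin hα (tfun k) = _
      rw [htfun, ← Finset.coe_orderIsoOfFin_apply, OrderIso.apply_symm_apply]
    · rw [show embE β hβ hβ' (Sum.inr k) = βᶜ.orderEmbOfFin hβ' k from rfl, mix_apply_right]
      show αᶜ.orderEmbOfFin hα' (rfun k) = _
      rw [hrfun, ← Finset.coe_orderIsoOfFin_apply, OrderIso.apply_symm_apply]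
  · rintro ⟨p, rfl⟩
    exact mix_image α β hα hβ hα' hβ' p.1 p.2

lemma mix_injective (α β : Finset (Fin n)) (hα hβ hα' hβ') :
    Function.Injective (fun p : Equiv.Perm (Fin m) × Equiv.Perm (Fin mc) =>
      mix α β hα hβ hα' hβ' p.1 p.2) := by
  rintro ⟨τ, ρ⟩ ⟨τ', ρ'⟩ h
  simp only at h
  have hτ : τ = τ' := by
    apply Equiv.ext
    intro k
    have := DFunLike.congr_fun h (β.orderEmbOfFin hβ k)
    rw [mix_apply_left, mix_apply_left] at this
    exact (α.orderEmbOfFin hα).injective this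
  have hρ : ρ = ρ' := by
    apply Equiv.ext
    intro k
    have := DFunLike.congr_fun h (βᶜ.orderEmbOfFin hβ' k)
    rw [mix_apply_right, mix_apply_right] at this
    exact (αᶜ.orderEmbOfFin hα').injective this
  rw [hτ, hρ]

lemma fiber_sum (A B : Matrix (Fin n) (Fin n) ℝ) (α β : Finset (Fin n))
    (hα : α.card = m) (hβ : β.card = m) (hα' : αᶜ.card = mc) (hβ' : βᶜ.card = mc) :
    ∑ σ ∈ Finset.univ.filter (fun σ : Equiv.Perm (Fin n) => β.image σ = α),
        ((Equiv.Perm.sign σ : ℤ) : ℝ) * ((∏ i ∈ β, A (σ i) i) * ∏ i ∈ βᶜ, B (σ i) i) =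
      (-1 : ℝ) ^ ((∑ i ∈ α, (i : ℕ)) + ∑ j ∈ β, (j : ℕ)) *
        (A.submatrix (α.orderEmbOfFin hα) (β.orderEmbOfFin hβ)).det *
        (B.submatrix (αᶜ.orderEmbOfFin hα') (βᶜ.orderEmbOfFin hβ')).det := by
  rw [fiber_eq_image α β hα hβ hα' hβ',
    Finset.sum_image (fun p _ q _ h => mix_injective α β hα hβ hα' hβ' h)]
  have hterm : ∀ p : Equiv.Perm (Fin m) × Equiv.Perm (Fin mc),
      ((Equiv.Perm.sign (mix α β hα hβ hα' hβ' p.1 p.2) : ℤ) : ℝ) *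
        ((∏ i ∈ β, A (mix α β hα hβ hα' hβ' p.1 p.2 i) i) *
          ∏ i ∈ βᶜ, B (mix α β hα hβ hα' hβ' p.1 p.2 i) i) =
      (-1 : ℝ) ^ ((∑ i ∈ α, (i : ℕ)) + ∑ j ∈ β, (j : ℕ)) *
        (((Equiv.Perm.sign p.1 : ℤ) : ℝ) *
          ∏ k : Fin m, (A.submatrix (α.orderEmbOfFin hα) (β.orderEmbOfFin hβ)) (p.1 k) k) *
        (((Equiv.Perm.sign p.2 : ℤ) : ℝ) *
          ∏ k : Fin mc, (B.submatrix (αᶜ.orderEmbOfFin hα') (βᶜ.orderEmbOfFin hβ')) (p.2 k) k) := by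
    rintro ⟨τ, ρ⟩
    have hsign := sign_mix α β hα hβ hα' hβ' τ ρ
    have hsigncast : ((Equiv.Perm.sign (mix α β hα hβ hα' hβ' τ ρ) : ℤ) : ℝ) =
        (-1 : ℝ) ^ ((∑ i ∈ α, (i : ℕ)) + ∑ j ∈ β, (j : ℕ)) *
          (((Equiv.Perm.sign τ : ℤ) : ℝ) * ((Equiv.Perm.sign ρ : ℤ) : ℝ)) := by
      rw [hsign]
      push_cast
      norm_num
    have hprodA : (∏ i ∈ β, A (mix α β hα hβ hα' hβ' τ ρ i) i) =
        ∏ k : Fin m, (A.submatrix (α.orderEmbOfFin hα) (β.orderEmbOfFin hβ)) (τ k) k := by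
      rw [prod_finset_eq β hβ]
      refine Finset.prod_congr rfl fun k _ => ?_
      rw [mix_apply_left]
      rfl
    have hprodB : (∏ i ∈ βᶜ, B (mix α β hα hβ hα' hβ' τ ρ i) i) =
        ∏ k : Fin mc, (B.submatrix (αᶜ.orderEmbOfFin hα') (βᶜ.orderEmbOfFin hβ')) (ρ k) k := by
      rw [prod_finset_eq βᶜ hβ']
      refine Finset.prod_congr rfl fun k _ => ?_
      rw [mix_apply_right]
      rfl
    rw [hsigncast, hprodA, hprodB]
    ring
  trans ∑ p : Equiv.Perm (Fin m) × Equiv.Perm (Fin mc),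
      (-1 : ℝ) ^ ((∑ i ∈ α, (i : ℕ)) + ∑ j ∈ β, (j : ℕ)) *
        (((Equiv.Perm.sign p.1 : ℤ) : ℝ) *
          ∏ k : Fin m, (A.submatrix (α.orderEmbOfFin hα) (β.orderEmbOfFin hβ)) (p.1 k) k) *
        (((Equiv.Perm.sign p.2 : ℤ) : ℝ) *
          ∏ k : Fin mc, (B.submatrix (αᶜ.orderEmbOfFin hα') (βᶜ.orderEmbOfFin hβ')) (p.2 k) k)
  · exact Finset.sum_congr rfl fun p _ => hterm p
  · rw [Matrix.det_apply', Matrix.det_apply', Fintype.sum_prod_type]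
    simp only [Finset.mul_sum, Finset.sum_mul]
    rw [Finset.sum_comm]


end Stmt7Aux

open Matrix Finset

theorem stmt7 (n : ℕ) (A B : Matrix (Fin n) (Fin n) ℝ) :
    (A + B).det =
      ∑ α : Finset (Fin n), ∑ β : Finset (Fin n),
        if h : α.card = β.card then
          (-1 : ℝ) ^ ((∑ i ∈ α, (i : ℕ)) + ∑ j ∈ β, (j : ℕ)) *
            (A.submatrix (α.orderEmbOfFin rfl) (β.orderEmbOfFin h.symm)).det *
            (B.submatrix (αᶜ.orderEmbOfFin rfl)
              (βᶜ.orderEmbOfFin (by rw [Finset.card_compl, Finset.card_compl, h]))).det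
        else 0 := by
  classical
  rw [Matrix.det_apply']
  have step1 : ∀ σ : Equiv.Perm (Fin n),
      ((Equiv.Perm.sign σ : ℤ) : ℝ) * ∏ i, (A + B) (σ i) i =
        ∑ β : Finset (Fin n), ((Equiv.Perm.sign σ : ℤ) : ℝ) *
          ((∏ i ∈ β, A (σ i) i) * ∏ i ∈ βᶜ, B (σ i) i) := by
    intro σ
    rw [← Finset.mul_sum]
    congr 1
    have h := Finset.prod_add (fun i => A (σ i) i) (fun i => B (σ i) i) Finset.univ
    rw [Finset.powerset_univ] at h
    calc ∏ i, (A + B) (σ i) i = ∏ i, (A (σ i) i + B (σ i) i) := by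
          simp [Matrix.add_apply]
      _ = ∑ β : Finset (Fin n), (∏ i ∈ β, A (σ i) i) * ∏ i ∈ Finset.univ \ β, B (σ i) i := h
      _ = ∑ β : Finset (Fin n), (∏ i ∈ β, A (σ i) i) * ∏ i ∈ βᶜ, B (σ i) i := by
          refine Finset.sum_congr rfl fun β _ => ?_
          rw [Finset.compl_eq_univ_sdiff]
  simp only [step1]
  rw [Finset.sum_comm]
  conv_rhs => rw [Finset.sum_comm]
  refine Finset.sum_congr rfl fun β _ => ?_
  rw [← Finset.sum_fiberwise_of_maps_to
    (g := fun σ : Equiv.Perm (Fin n) => β.image σ)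
    (fun σ _ => Finset.mem_univ (β.image σ))]
  refine Finset.sum_congr rfl fun α _ => ?_
  by_cases h : α.card = β.card
  · rw [dif_pos h]
    exact Stmt7Aux.fiber_sum A B α β rfl h.symm rfl
      (by rw [Finset.card_compl, Finset.card_compl, h])
  · rw [dif_neg h]
    have hempty : ∀ σ ∈ (Finset.univ : Finset (Equiv.Perm (Fin n))), ¬ (β.image σ = α) :=
      fun σ _ heq =>
        h (by rw [← heq, Finset.card_image_of_injective _ σ.injective])
    rw [Finset.filter_false_of_mem hempty, Finset.sum_empty]
end

section
/- Let d, N ∈ ℕ, let u, v : [N] → ℝ^d, and let M ∈ {0,1}^{N×N} be a boolean matrix such that for all i,j ∈ [N]: M(i,j) = 0 if and only if the Euclidean distance ‖u(i) − v(j)‖₂ equals 1. Then suprank(M) ≤ 3d + 1. (In particular, the complement of the bi-adjacency matrix of a bipartite unit-distance graph in dimension d has support-rank O(d).) -/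
/-!
The real matrix `A i j = ‖u i - v j‖ ^ 2 - 1` has exactly the support of `M`. Expanding
`‖u i - v j‖ ^ 2 = ∑ k, (u i k ^ 2 - 2 * u i k * v j k + v j k ^ 2)` factors `A` through
`3 * d + 1` columns (three per coordinate and one for the constant), so `rank A ≤ 3 * d + 1`.
-/

open Matrix

lemma suprank_le_rank {I J : Type*} [Fintype J] {M : Matrix I J Bool} {A : Matrix I J ℝ}
    (hA : ∀ i j, A i j = 0 ↔ M i j = false) : suprank M ≤ A.rank :=
  Nat.sInf_le ⟨A, rfl, hA⟩

lemma rank_sqDist_sub_const_le {ι I J : Type*} [Fintype ι] [Fintype J]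
    (u : I → EuclideanSpace ℝ ι) (v : J → EuclideanSpace ℝ ι) (c : ℝ) :
    (of fun i j => ‖u i - v j‖ ^ 2 - c).rank ≤ 3 * Fintype.card ι + 1 := by
  let B : Matrix I ((ι × Fin 3) ⊕ Unit) ℝ := of fun i x =>
    x.elim (fun p => ![u i p.1 ^ 2, u i p.1, 1] p.2) fun _ => -c
  let C : Matrix ((ι × Fin 3) ⊕ Unit) J ℝ := of fun x j =>
    x.elim (fun p => ![1, -2 * v j p.1, v j p.1 ^ 2] p.2) fun _ => 1
  have hBC : (of fun i j => ‖u i - v j‖ ^ 2 - c) = B * C := by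
    ext i j
    simp only [of_apply, mul_apply, B, C, EuclideanSpace.norm_sq_eq, Fintype.sum_sum_type,
      Fintype.sum_prod_type, Fin.sum_univ_three, Sum.elim_inl, Sum.elim_inr, PiLp.sub_apply,
      Real.norm_eq_abs, sq_abs, cons_val_zero, cons_val_one, cons_val, Finset.univ_unique,
      Finset.sum_singleton]
    rw [sub_eq_add_neg, mul_one]
    congr 1
    exact Finset.sum_congr rfl fun k _ => by ring
  calc (of fun i j => ‖u i - v j‖ ^ 2 - c).rank
      = (B * C).rank := by rw [hBC]
    _ ≤ Fintype.card ((ι × Fin 3) ⊕ Unit) := (rank_mul_le_left B C).trans (rank_le_card_width B)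
    _ = 3 * Fintype.card ι + 1 := by simp [mul_comm]

lemma sq_norm_sub_one_eq_zero_iff {E : Type*} [SeminormedAddCommGroup E] (x : E) :
    ‖x‖ ^ 2 - 1 = 0 ↔ ‖x‖ = 1 := by
  rw [sub_eq_zero, pow_eq_one_iff_of_nonneg (norm_nonneg x) two_ne_zero]

theorem stmt8 (d N : ℕ) (u v : Fin N → EuclideanSpace ℝ (Fin d))
    (M : Matrix (Fin N) (Fin N) Bool)
    (h : ∀ i j, M i j = false ↔ ‖u i - v j‖ = 1) :
    suprank M ≤ 3 * d + 1 := by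
  have hsupp : ∀ i j, (of fun i j => ‖u i - v j‖ ^ 2 - 1) i j = 0 ↔ M i j = false := fun i j => by
    rw [of_apply, sq_norm_sub_one_eq_zero_iff, h]
  simpa using (suprank_le_rank hsupp).trans (rank_sqDist_sub_const_le u v 1)
end

section
/- Let N, a, b, r ∈ ℕ, let A, B : [N] → ℝ^{a×b}, and let P ∈ {0,1}^{N×N} be the boolean matrix defined by P(x,y) = 1 if and only if rank(A(x) + B(y)) ≥ r. Then suprank(P) ≤ 4^r. (Monotone rank problems of order k, or their negations, have support-rank at most 4^k.) -/
/-!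
Choose `R : r × a` and `S : b × r` generically, so that `det (R M S) ≠ 0` for every one of the
finitely many matrices `M = A x + B y` of rank at least `r`; the zero pattern of
`det (R (A x + B y) S)` is then exactly that of `P`, since this determinant vanishes whenever
`rank (A x + B y) < r`. Such `R, S` exist because each `det (R M S)` is a nonzero polynomial in
the entries of `R` and `S` (some choice gives `R M S = 1`). Writing `X = R A x S`,
`Y = R B y S`, we have `det (X + Y) = det [X, -1; Y, 1]`, an alternating form in the first `r`
rows of a `2r × 2r` matrix. It therefore factors through `⋀^r K^{2r}`, of dimension
`(2r).choose r ≤ 4^r`, and this bounds the rank of the matrix `(x, y) ↦ det (X x + Y y)`.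
-/

open Matrix

namespace Matrix

theorem fromRows_of_update {R m n : Type*} [DecidableEq m] [DecidableEq n]
    (U : m → m ⊕ n → R) (W : Matrix n (m ⊕ n) R) (i : m) (u : m ⊕ n → R) :
    fromRows (of (Function.update U i u)) W = updateRow (fromRows (of U) W) (Sum.inl i) u := by
  ext (j | j) c
  · by_cases h : j = i
    · subst h; simp
    · simp [h]
  · simp

def detFromRows {R m n : Type*} [CommRing R] [Fintype m] [Fintype n] [DecidableEq m]
    [DecidableEq n] (W : Matrix n (m ⊕ n) R) : (m ⊕ n → R) [⋀^m]→ₗ[R] R where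
  toFun U := (fromRows (of U) W).det
  -- `convert` reconciles the `DecidableEq m` instance bound by these fields with ours.
  map_update_add' U i u v := by
    simp only [fromRows_of_update]
    convert det_updateRow_add _ _ u v
  map_update_smul' U i c u := by
    simp only [fromRows_of_update, smul_eq_mul]
    convert det_updateRow_smul _ _ c u
  map_eq_zero_of_eq' U i j hij hne := det_zero_of_row_eq (i := Sum.inl i) (j := Sum.inl j)
    (by simpa using hne) (by ext c; simp [hij])

theorem det_add_eq_det_fromRows {K ι : Type*} [CommRing K] [Fintype ι] [DecidableEq ι]
    (X Y : Matrix ι ι K) :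
    (X + Y).det = (fromRows (fromCols X (-1)) (fromCols Y 1)).det := by
  rw [fromRows_fromCols_eq_fromBlocks, det_fromBlocks_one₂₂, Matrix.neg_mul, Matrix.one_mul,
    sub_neg_eq_add]

theorem rank_le_finrank_of_row_mem_range {K E m n : Type*} [Field K] [AddCommGroup E]
    [Module K E] [FiniteDimensional K E] [Finite m] [Fintype n] (C : Matrix m n K)
    (Ψ : E →ₗ[K] n → K) (hC : ∀ i, C i ∈ LinearMap.range Ψ) :
    C.rank ≤ Module.finrank K E := by
  rw [rank_eq_finrank_span_row]
  calc _ ≤ Module.finrank K (LinearMap.range Ψ) :=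
        Submodule.finrank_mono (Submodule.span_le.mpr (Set.range_subset_iff.mpr hC))
    _ ≤ _ := LinearMap.finrank_range_le Ψ

theorem rank_of_alternatingMap_le {K M ι m n : Type*} [Field K] [AddCommGroup M]
    [Module K M] [FiniteDimensional K M] [Fintype ι] [Finite m] [Fintype n]
    (f : n → M [⋀^ι]→ₗ[K] K) (U : m → ι → M) :
    (of fun x y => f y (U x)).rank ≤ (Module.finrank K M).choose (Fintype.card ι) := by
  set e := Fintype.equivFin ι
  rw [← exteriorPower.finrank_eq]
  refine rank_le_finrank_of_row_mem_range _ (exteriorPower.alternatingMapLinearEquiv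
    (AlternatingMap.pi fun y => (f y).domDomCongr e)) fun x =>
      ⟨exteriorPower.ιMulti K _ (U x ∘ e.symm), ?_⟩
  ext y
  simp [Function.comp_def]

theorem rank_of_det_add_le {K ι m n : Type*} [Field K] [Fintype ι] [DecidableEq ι]
    [Finite m] [Fintype n] (X : m → Matrix ι ι K) (Y : n → Matrix ι ι K) :
    (of fun x y => (X x + Y y).det).rank ≤ (2 * Fintype.card ι).choose (Fintype.card ι) := by
  have h := rank_of_alternatingMap_le (fun y => detFromRows (fromCols (Y y) 1))
    (fun x => fromCols (X x) (-1))
  rw [Module.finrank_fintype_fun_eq_card, Fintype.card_sum, ← two_mul] at h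
  convert h using 3
  ext x y
  exact det_add_eq_det_fromRows (X x) (Y y)

theorem exists_mul_mul_eq_one_of_le_rank {K m n : Type*} [Field K] [Fintype m]
    [Fintype n] {k : ℕ} (M : Matrix m n K) (h : k ≤ M.rank) :
    ∃ (R : Matrix (Fin k) m K) (S : Matrix n (Fin k) K), R * M * S = 1 := by
  classical
  obtain ⟨w, hw⟩ := exists_linearIndependent_of_le_finrank h
  choose v hv using fun i => LinearMap.mem_range.mp (w i).2
  set s := Fintype.linearCombination K v
  have hMs : M.mulVecLin ∘ₗ s = Fintype.linearCombination K (fun i => (w i : m → K)) := by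
    refine LinearMap.ext fun c => ?_
    simp [s, Fintype.linearCombination_apply, hv]
  have hinj : LinearMap.ker (M.mulVecLin ∘ₗ s) = ⊥ := by
    rw [hMs, LinearMap.ker_eq_bot, ← linearIndependent_iff_injective_fintypeLinearCombination]
    exact hw.map' _ (Submodule.ker_subtype _)
  obtain ⟨g, hg⟩ := LinearMap.exists_leftInverse_of_injective _ hinj
  refine ⟨LinearMap.toMatrix' g, LinearMap.toMatrix' s, ?_⟩
  rw [← LinearMap.toMatrix'_id, ← hg, LinearMap.toMatrix'_comp, LinearMap.toMatrix'_comp,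
    Matrix.mul_assoc, ← Matrix.toLin'_apply', LinearMap.toMatrix'_toLin']

theorem _root_.MvPolynomial.exists_forall_eval_ne_zero_s10 {R σ ι : Type*} [CommRing R] [IsDomain R]
    [Infinite R] (s : Finset ι) (p : ι → MvPolynomial σ R) (hp : ∀ i ∈ s, p i ≠ 0) :
    ∃ x, ∀ i ∈ s, MvPolynomial.eval x (p i) ≠ 0 := by
  by_contra! h
  refine Finset.prod_ne_zero_iff.mpr hp (MvPolynomial.funext fun x => ?_)
  obtain ⟨i, hi, hx⟩ := h x
  rw [map_prod, Finset.prod_eq_zero hi hx, map_zero]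

open MvPolynomial in
theorem exists_forall_det_mul_mul_ne_zero {K ι m n : Type*} [Field K] [Infinite K]
    [Fintype ι] [Fintype m] [Fintype n] (k : ℕ) (M : ι → Matrix m n K) :
    ∃ (R : Matrix (Fin k) m K) (S : Matrix n (Fin k) K),
      ∀ i, k ≤ (M i).rank → (R * M i * S).det ≠ 0 := by
  let R (x : (Fin k × m) ⊕ (n × Fin k) → K) : Matrix (Fin k) m K :=
    of fun a b => x (Sum.inl (a, b))
  let S (x : (Fin k × m) ⊕ (n × Fin k) → K) : Matrix n (Fin k) K :=
    of fun b a => x (Sum.inr (b, a))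
  let RX : Matrix (Fin k) m (MvPolynomial ((Fin k × m) ⊕ (n × Fin k)) K) :=
    of fun a b => X (Sum.inl (a, b))
  let SX : Matrix n (Fin k) (MvPolynomial ((Fin k × m) ⊕ (n × Fin k)) K) :=
    of fun b a => X (Sum.inr (b, a))
  let p (i : ι) := (RX * (M i).map (C (σ := (Fin k × m) ⊕ (n × Fin k))) * SX).det
  have eval_p (x) (i) : eval x (p i) = (R x * M i * S x).det := by
    rw [RingHom.map_det, RingHom.mapMatrix_apply, Matrix.map_mul, Matrix.map_mul]
    congr 3 <;> ext <;> simp [R, S, RX, SX]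
  have hp : ∀ i ∈ Finset.univ.filter fun i => k ≤ (M i).rank, p i ≠ 0 := by
    intro i hi hpi
    obtain ⟨R₀, S₀, hRS⟩ :=
      exists_mul_mul_eq_one_of_le_rank (M i) (Finset.mem_filter.mp hi).2
    have h := eval_p (Sum.elim (fun q => R₀ q.1 q.2) (fun q => S₀ q.1 q.2)) i
    change eval _ (p i) = (R₀ * M i * S₀).det at h
    rw [hpi, map_zero, hRS, det_one] at h
    exact zero_ne_one h
  obtain ⟨x, hx⟩ := exists_forall_eval_ne_zero_s10 _ p hp
  exact ⟨R x, S x, fun i hi => eval_p x i ▸ hx i (by simpa using hi)⟩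

theorem le_rank_of_det_mul_mul_ne_zero {K m n : Type*} [Field K] [Fintype m] [Fintype n] {k : ℕ}
    {R : Matrix (Fin k) m K} {M : Matrix m n K} {S : Matrix n (Fin k) K}
    (h : (R * M * S).det ≠ 0) : k ≤ M.rank :=
  calc k = (R * M * S).rank := by
        rw [rank_of_isUnit _ ((isUnit_iff_isUnit_det _).mpr h.isUnit), Fintype.card_fin]
    _ ≤ (R * M).rank := rank_mul_le_left _ _
    _ ≤ M.rank := rank_mul_le_right _ _

end Matrix

theorem stmt10 (N a b r : ℕ) (A B : Fin N → Matrix (Fin a) (Fin b) ℝ)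
    (P : Matrix (Fin N) (Fin N) Bool)
    (hP : ∀ x y, P x y = true ↔ r ≤ (A x + B y).rank) :
    suprank P ≤ 4 ^ r := by
  obtain ⟨R, S, hRS⟩ :=
    exists_forall_det_mul_mul_ne_zero r fun p : Fin N × Fin N => A p.1 + B p.2
  let C : Matrix (Fin N) (Fin N) ℝ := of fun x y => (R * A x * S + R * B y * S).det
  have hC : ∀ x y, C x y = 0 ↔ P x y = false := by
    intro x y
    have hxy : C x y = (R * (A x + B y) * S).det := by
      simp only [C, of_apply, Matrix.mul_add, Matrix.add_mul]
    rw [hxy, ← Bool.not_eq_true, hP]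
    exact ⟨fun h0 hr => hRS (x, y) hr h0, not_imp_comm.mp le_rank_of_det_mul_mul_ne_zero⟩
  calc suprank P ≤ C.rank := Nat.sInf_le ⟨C, rfl, hC⟩
    _ ≤ (2 * r).choose r := by
      simpa using rank_of_det_add_le (fun x => R * A x * S) (fun y => R * B y * S)
    _ ≤ 4 ^ r := by
      simpa [pow_mul] using Nat.choose_le_two_pow (2 * r) r
end

section
/- Let k, q, N ∈ ℕ. For each i ∈ [q], let A_i, B_i : [N] → ℝ^{k×k} and let g_i : ℕ → {0,1}. Let Γ : {0,1}^q → {0,1} and define P ∈ {0,1}^{N×N} by P(x,y) = Γ(g_1(rank(A_1(x)+B_1(y))), …, g_q(rank(A_q(x)+B_q(y)))). Then P is a rank problem of order (k+1)^q − 1: there exist a, b ∈ ℕ, maps A, B : [N] → ℝ^{a×b}, and g : ℕ → {0,1} constant on inputs ≥ (k+1)^q − 1, such that P(x,y) = g(rank(A(x)+B(y))) for all x,y. Moreover, if B_i(x) = −A_i(x) for all i and x, then A and B can be chosen with B(x) = −A(x) for all x. -/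
/-!
Put the matrices `A_i(x) + B_i(y)` on the diagonal of one block-diagonal matrix, the `i`-th one
repeated `(k + 1)^i` times. Its rank is `∑ rᵢ (k + 1)^i` with `rᵢ = rank (A_i(x) + B_i(y)) ≤ k`,
the number with base-`(k + 1)` digits `rᵢ`. It is below `(k + 1)^q`, so clamping the rank at
`(k + 1)^q - 1` and reading off its digits recovers every `rᵢ`, hence `P(x, y)`. The construction
is additive in the blocks, so it preserves `B_i(x) = -A_i(x)`.
-/

open Matrix

theorem LinearMap.finrank_range_piMap {K ι : Type*} [DivisionRing K] [Fintype ι]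
    {φ ψ : ι → Type*} [∀ i, AddCommGroup (φ i)] [∀ i, Module K (φ i)]
    [∀ i, AddCommGroup (ψ i)] [∀ i, Module K (ψ i)] [∀ i, FiniteDimensional K (ψ i)]
    (f : ∀ i, φ i →ₗ[K] ψ i) :
    Module.finrank K (LinearMap.range (LinearMap.piMap f)) =
      ∑ i, Module.finrank K (LinearMap.range (f i)) := by
  have hfactor : LinearMap.piMap f =
      LinearMap.piMap (fun i => (LinearMap.range (f i)).subtype) ∘ₗ
        LinearMap.piMap (fun i => (f i).rangeRestrict) := rfl
  rw [hfactor, LinearMap.range_comp_of_range_eq_top, LinearMap.finrank_range_of_inj,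
    Module.finrank_pi_fintype]
  · exact Function.Injective.piMap fun i => Subtype.val_injective
  · exact LinearMap.range_eq_top.mpr
      (Function.Surjective.piMap fun i => (f i).surjective_rangeRestrict)

namespace Matrix

variable {ι : Type*} [DecidableEq ι] {m n : ι → Type*}

theorem blockDiagonal'_mulVec_apply [Fintype ι] {R : Type*} [NonUnitalNonAssocSemiring R]
    [∀ i, Fintype (n i)] (M : ∀ i, Matrix (m i) (n i) R) (v : (Σ i, n i) → R)
    (i : ι) (a : m i) :
    (blockDiagonal' M *ᵥ v) ⟨i, a⟩ = (M i *ᵥ fun b => v ⟨i, b⟩) a := by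
  simp only [mulVec, dotProduct, Fintype.sum_sigma]
  rw [Finset.sum_eq_single i]
  · simp only [blockDiagonal'_apply_eq]
  · intro j _ hji
    simp [blockDiagonal'_apply_ne M _ _ hji.symm]
  · simp

theorem rank_blockDiagonal' [Fintype ι] {K : Type*} [Field K] [∀ i, Fintype (m i)]
    [∀ i, Fintype (n i)] (M : ∀ i, Matrix (m i) (n i) K) :
    (blockDiagonal' M).rank = ∑ i, (M i).rank := by
  have hconj : (blockDiagonal' M).mulVecLin =
      (LinearEquiv.piCurry K fun i (_ : m i) => K).symm.toLinearMap ∘ₗ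
        LinearMap.piMap (fun i => (M i).mulVecLin) ∘ₗ
          (LinearEquiv.piCurry K fun i (_ : n i) => K).toLinearMap := by
    ext v ⟨i, a⟩
    exact blockDiagonal'_mulVec_apply M _ i a
  rw [rank, hconj, LinearMap.range_comp, LinearMap.range_comp_of_range_eq_top,
    LinearEquiv.finrank_map_eq, LinearMap.finrank_range_piMap]
  · rfl
  · exact LinearEquiv.range _

def repeatedBlockDiagonal {α : Type*} [Zero α] (w : ι → ℕ)
    (M : ∀ i, Matrix (m i) (n i) α) :
    Matrix (Σ p : Σ i, Fin (w i), m p.1) (Σ p : Σ i, Fin (w i), n p.1) α :=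
  blockDiagonal' fun p => M p.1

theorem repeatedBlockDiagonal_add {α : Type*} [AddZeroClass α] (w : ι → ℕ)
    (M N : ∀ i, Matrix (m i) (n i) α) :
    repeatedBlockDiagonal w (M + N) = repeatedBlockDiagonal w M + repeatedBlockDiagonal w N :=
  blockDiagonal'_add _ _

theorem repeatedBlockDiagonal_neg {α : Type*} [AddGroup α] (w : ι → ℕ)
    (M : ∀ i, Matrix (m i) (n i) α) :
    repeatedBlockDiagonal w (-M) = -repeatedBlockDiagonal w M :=
  blockDiagonal'_neg _

theorem rank_repeatedBlockDiagonal [Fintype ι] {K : Type*} [Field K] [∀ i, Fintype (m i)]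
    [∀ i, Fintype (n i)] (w : ι → ℕ) (M : ∀ i, Matrix (m i) (n i) K) :
    (repeatedBlockDiagonal w M).rank = ∑ i, w i * (M i).rank := by
  rw [repeatedBlockDiagonal, rank_blockDiagonal', Fintype.sum_sigma]
  exact Finset.sum_congr rfl fun i _ => (Finset.sum_const (M i).rank).trans (by simp)

variable {K : Type*} [Field K] {q : ℕ} {m n : Type*} [Fintype m] [Fintype n]

noncomputable def powBlockDiagonal (b : ℕ) (M : Fin q → Matrix m n K) :
    Matrix (Fin (Fintype.card (Σ _ : Σ i : Fin q, Fin (b ^ (i : ℕ)), m)))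
      (Fin (Fintype.card (Σ _ : Σ i : Fin q, Fin (b ^ (i : ℕ)), n))) K :=
  reindex (Fintype.equivFin _) (Fintype.equivFin _)
    (repeatedBlockDiagonal (fun i : Fin q => b ^ (i : ℕ)) M)

theorem powBlockDiagonal_add (b : ℕ) (M M' : Fin q → Matrix m n K) :
    powBlockDiagonal b (M + M') = powBlockDiagonal b M + powBlockDiagonal b M' := by
  simp only [powBlockDiagonal, repeatedBlockDiagonal_add, reindex_apply]
  rfl

theorem powBlockDiagonal_neg (b : ℕ) (M : Fin q → Matrix m n K) :
    powBlockDiagonal b (-M) = -powBlockDiagonal b M := by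
  simp only [powBlockDiagonal, repeatedBlockDiagonal_neg, reindex_apply]
  rfl

theorem rank_powBlockDiagonal (b : ℕ) (M : Fin q → Matrix m n K) :
    (powBlockDiagonal b M).rank = ∑ i, (M i).rank * b ^ (i : ℕ) := by
  rw [powBlockDiagonal, rank_reindex,
    rank_repeatedBlockDiagonal (m := fun _ => m) (n := fun _ => n)]
  simp only [mul_comm]

end Matrix

theorem finFunctionFinEquiv_val_div_pow_mod {b q : ℕ} (r : Fin q → Fin b) (i : Fin q) :
    (finFunctionFinEquiv r : ℕ) / b ^ (i : ℕ) % b = r i := by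
  rw [← finFunctionFinEquiv_symm_apply_val, Equiv.symm_apply_apply]

theorem stmt12 (k q N : ℕ)
    (A B : Fin q → Fin N → Matrix (Fin k) (Fin k) ℝ)
    (g : Fin q → ℕ → Bool)
    (Γ : (Fin q → Bool) → Bool)
    (P : Matrix (Fin N) (Fin N) Bool)
    (hP : ∀ x y, P x y = Γ (fun i => g i ((A i x + B i y).rank))) :
    ∃ (a b : ℕ) (A' B' : Fin N → Matrix (Fin a) (Fin b) ℝ) (g' : ℕ → Bool),
      (∀ m, (k + 1) ^ q - 1 ≤ m → g' m = g' ((k + 1) ^ q - 1)) ∧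
      (∀ x y, P x y = g' ((A' x + B' y).rank)) ∧
      ((∀ i x, B i x = -A i x) → ∀ x, B' x = -A' x) := by
  refine ⟨_, _, fun x => powBlockDiagonal (k + 1) fun i => A i x,
    fun y => powBlockDiagonal (k + 1) fun i => B i y,
    fun m => Γ fun i => g i (min m ((k + 1) ^ q - 1) / (k + 1) ^ (i : ℕ) % (k + 1)),
    fun m hm => by simp only [min_eq_right hm, min_self], fun x y => ?_, fun hBA x => ?_⟩
  · let r (i : Fin q) : Fin (k + 1) :=
      ⟨(A i x + B i y).rank, Nat.lt_succ_of_le (rank_le_height _)⟩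
    have hrank : ((powBlockDiagonal (k + 1) fun i => A i x) +
        powBlockDiagonal (k + 1) fun i => B i y).rank = finFunctionFinEquiv r := by
      rw [← powBlockDiagonal_add, rank_powBlockDiagonal, finFunctionFinEquiv_apply]
      rfl
    dsimp only
    rw [hP, hrank, min_eq_left (Nat.le_sub_one_of_lt (Fin.is_lt _))]
    simp only [finFunctionFinEquiv_val_div_pow_mod, r]
  · have hB : (fun i => B i x) = -fun i => A i x := funext fun i => hBA i x
    dsimp only
    rw [hB, powBlockDiagonal_neg]
end

section
/- Let s ∈ ℕ and let U and V be finite multisets of natural numbers, all of whose elements lie in {0, 1, …, s}, with |U| = |V|. If for every t ∈ {1, …, s} it holds that Σ_{u∈U} min(u, t) = Σ_{v∈V} min(v, t), then U = V. -/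
private lemma step13 (t : ℕ) (U : Multiset ℕ) :
    (U.map (fun u => min u (t+1))).sum
      = (U.map (fun u => min u t)).sum + U.countP (fun u => t + 1 ≤ u) := by
  induction U using Multiset.induction_on with
  | empty => simp
  | cons a M ih =>
      simp only [Multiset.map_cons, Multiset.sum_cons, Multiset.countP_cons]
      rw [ih]
      have hm : min a (t+1) = min a t + (if t + 1 ≤ a then 1 else 0) := by
        simp only [min_def]; split_ifs <;> omega
      rw [hm]; split_ifs <;> omega

private lemma count13 (k : ℕ) (U : Multiset ℕ) :
    U.countP (fun u => k ≤ u) = U.countP (fun u => k + 1 ≤ u) + U.count k := by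
  induction U using Multiset.induction_on with
  | empty => simp
  | cons a M ih =>
      simp only [Multiset.countP_cons, Multiset.count_cons, ih]
      split_ifs <;> omega

theorem stmt13 (s : ℕ) (U V : Multiset ℕ)
    (hU : ∀ u ∈ U, u ≤ s) (hV : ∀ v ∈ V, v ≤ s)
    (hcard : Multiset.card U = Multiset.card V)
    (h : ∀ t, 1 ≤ t → t ≤ s →
      (U.map (fun u => min u t)).sum = (V.map (fun v => min v t)).sum) :
    U = V := by
  have hS : ∀ t, t ≤ s →
      (U.map (fun u => min u t)).sum = (V.map (fun v => min v t)).sum := by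
    intro t ht
    rcases Nat.eq_zero_or_pos t with h0 | h1
    · simp [h0]
    · exact h t h1 ht
  have hg : ∀ t : ℕ, U.countP (fun u => t ≤ u) = V.countP (fun v => t ≤ v) := by
    intro t
    rcases Nat.lt_or_ge s t with hst | hst
    · have hu0 : U.countP (fun u => t ≤ u) = 0 := by
        rw [Multiset.countP_eq_zero]
        intro a ha
        have := hU a ha; omega
      have hv0 : V.countP (fun v => t ≤ v) = 0 := by
        rw [Multiset.countP_eq_zero]
        intro a ha
        have := hV a ha; omega
      rw [hu0, hv0]
    · rcases Nat.eq_zero_or_pos t with h0 | h1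
      · subst h0
        simpa [Multiset.countP_eq_card] using hcard
      · obtain ⟨t', rfl⟩ : ∃ t', t = t' + 1 := ⟨t - 1, by omega⟩
        have e1 := step13 t' U
        have e2 := step13 t' V
        have e3 := hS t' (by omega)
        have e4 := hS (t' + 1) hst
        omega
  ext k
  have h1 := hg k
  have h2 := hg (k + 1)
  have c1 := count13 k U
  have c2 := count13 k V
  omega
end

section
/- For all q, s ∈ ℕ there exists N ∈ ℕ such that the following holds: for every function Γ : {0,1}^q → {0,1}, every choice of sizes N_1, …, N_q ∈ ℕ, boolean matrices Q_t ∈ {0,1}^{N_t × N_t} with suprank(Q_t) ≤ s for each t ∈ [q], and functions a_t, b_t : [N] → [N_t], there exist x, y ∈ [N] with GT_N(x,y) ≠ Γ(Q_1(a_1(x), b_1(y)), …, Q_q(a_q(x), b_q(y))), where GT_N ∈ {0,1}^{N×N} is the Greater-Than matrix defined by GT_N(x,y) = 1 iff x ≤ y. (The Greater-Than problem is not a bounded boolean combination of matrices of bounded support-rank; hence P^SUPP ⊊ UPP.) -/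
/-!
Colour each pair `x < y` in `Fin N` by the two vectors `(Q t (a t y) (b t x))_t` and
`(Q t (a t x) (b t y))_t`. By Ramsey's theorem a long increasing chain is monochromatic, with
colours `D` and `E`. If `Γ` computed `GT_N` then `Γ D = false` and `Γ E = true`, so `D t ≠ E t`
for some `t`: along the chain `Q t` contains a half graph, and every real matrix with the support
of a half graph on `2k` vertices has a triangular `k × k` submatrix with nonzero diagonal, hence
rank at least `k`.
-/

open Matrix

open Finset

theorem Finset.exists_strictMono_color_eq_left {α β : Type*} [Fintype α] [Nonempty α]
    [LinearOrder β] (c : β → β → α) (L : ℕ) (S : Finset β) (hS : (Fintype.card α + 1) ^ L ≤ #S) :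
    ∃ (x : Fin L → β) (g : Fin L → α), StrictMono x ∧ (∀ i, x i ∈ S) ∧
      ∀ i j, i < j → c (x i) (x j) = g i := by
  classical
  induction L generalizing S with
  | zero => exact ⟨Fin.elim0, Fin.elim0, fun i => i.elim0, fun i => i.elim0, fun i => i.elim0⟩
  | succ L ih =>
    set K := Fintype.card α
    have hP : 1 ≤ (K + 1) ^ L := Nat.one_le_pow _ _ K.succ_pos
    have hS' : K * (K + 1) ^ L + (K + 1) ^ L ≤ #S := by rwa [pow_succ, mul_add_one, mul_comm] at hS
    have hne : S.Nonempty := card_pos.1 (by omega)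
    set x₀ := S.min' hne
    -- the least element `x₀` sees a single colour on `(K + 1) ^ L` of the remaining elements
    obtain ⟨col, -, hcol⟩ := exists_le_card_fiber_of_mul_le_card_of_maps_to
      (s := S.erase x₀) (f := c x₀) (n := (K + 1) ^ L) (fun _ _ => mem_univ _) univ_nonempty
      (by rw [card_univ, card_erase_of_mem (S.min'_mem hne)]; change K * _ ≤ _; omega)
    obtain ⟨x, g, hx, hxS, hg⟩ := ih _ hcol
    have hx₀ : ∀ j, x₀ < x j := fun j => by
      obtain ⟨hj, hjS⟩ := mem_erase.1 (mem_filter.1 (hxS j)).1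
      exact lt_of_le_of_ne (S.min'_le _ hjS) hj.symm
    refine ⟨Fin.cons x₀ x, Fin.cons col g, Fin.strictMono_cons.2 ⟨hx₀, hx⟩, ?_, ?_⟩
    · refine Fin.cases (S.min'_mem hne) fun i => ?_
      exact mem_of_mem_erase (mem_filter.1 (hxS i)).1
    · refine Fin.cases (Fin.cases (by simp) fun j _ => ?_) fun i => Fin.cases (by simp) ?_
      · exact (mem_filter.1 (hxS j)).2
      · exact fun j hij => hg i j (Fin.succ_lt_succ_iff.1 hij)

theorem exists_strictMono_pairwise_color_eq (α : Type*) [Fintype α] [Nonempty α] (m : ℕ) :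
    ∃ N, ∀ c : Fin N → Fin N → α, ∃ x : Fin m → Fin N, StrictMono x ∧
      ∃ col, ∀ i j, i < j → c (x i) (x j) = col := by
  classical
  let K := Fintype.card α
  refine ⟨(K + 1) ^ (K * m), fun c => ?_⟩
  obtain ⟨x, g, hx, -, hg⟩ := univ.exists_strictMono_color_eq_left c (K * m) (by simp [K])
  obtain ⟨col, hcol⟩ := Fintype.exists_le_card_fiber_of_mul_le_card (f := g) (n := m) (by simp [K])
  set e := orderEmbOfCardLe _ hcol
  refine ⟨x ∘ e, hx.comp e.strictMono, col, fun i j hij => ?_⟩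
  rw [Function.comp_apply, Function.comp_apply, hg _ _ (e.strictMono hij)]
  exact (mem_filter.1 (orderEmbOfCardLe_mem _ hcol i)).2

namespace Matrix

variable {m n R : Type*} [Fintype n] [CommRing R] [IsDomain R]

theorem card_le_rank_of_isLowerTriangular_submatrix {ι : Type*} [Fintype ι] [LinearOrder ι]
    (A : Matrix m n R) (r : ι → m) (c : ι → n) (hA : (A.submatrix r c).IsLowerTriangular)
    (hdiag : ∀ i, A (r i) (c i) ≠ 0) : Fintype.card ι ≤ A.rank := by
  classical
  have hdet : (A.submatrix r c).det ≠ 0 := by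
    rw [det_of_isLowerTriangular _ hA]
    exact prod_ne_zero_iff.2 fun i _ => hdiag i
  rw [← rank_of_det_ne_zero hdet]
  exact rank_submatrix_le A r c

theorem le_rank_of_halfGraph_pattern {k : ℕ} (A : Matrix m n R) (a : Fin (2 * k) → m)
    (b : Fin (2 * k) → n) (hbelow : ∀ i j, i < j → A (a j) (b i) ≠ 0)
    (habove : ∀ i j, i < j → A (a i) (b j) = 0) : k ≤ A.rank := by
  -- The diagonal entries `A (a i) (b i)` are unconstrained; rows `a (2i+1)` against columns
  -- `b (2j)` avoid them and form a lower triangular matrix with nonzero diagonal.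
  have h := A.card_le_rank_of_isLowerTriangular_submatrix
    (fun i : Fin k => a ⟨2 * i + 1, by omega⟩) (fun j : Fin k => b ⟨2 * j, by omega⟩)
    (fun i j hij => habove _ _ (Fin.mk_lt_mk.2 (by simp at hij; omega)))
    (fun i => hbelow _ _ (Fin.mk_lt_mk.2 (by omega)))
  rwa [Fintype.card_fin] at h

end Matrix

theorem le_suprank_of_halfGraph_pattern {I J : Type*} [Fintype I] [Fintype J] {k : ℕ}
    (M : Matrix I J Bool) (a : Fin (2 * k) → I) (b : Fin (2 * k) → J) {d e : Bool} (hde : d ≠ e)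
    (hbelow : ∀ i j, i < j → M (a j) (b i) = d) (habove : ∀ i j, i < j → M (a i) (b j) = e) :
    k ≤ suprank M := by
  obtain ⟨A, hA, hsupp⟩ := exists_rank_eq_suprank M
  rw [← hA]
  cases d <;> cases e <;> simp only [ne_eq, not_true_eq_false] at hde
  · rw [← rank_transpose]
    exact Aᵀ.le_rank_of_halfGraph_pattern b a (fun i j hij => by simp [hsupp, habove i j hij])
      (fun i j hij => by simp [hsupp, hbelow i j hij])
  · exact A.le_rank_of_halfGraph_pattern a b (fun i j hij => by simp [hsupp, hbelow i j hij])
      (fun i j hij => by simp [hsupp, habove i j hij])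

theorem stmt15 (q s : ℕ) :
    ∃ N : ℕ, ∀ (Γ : (Fin q → Bool) → Bool) (Nt : Fin q → ℕ)
      (Q : ∀ t, Matrix (Fin (Nt t)) (Fin (Nt t)) Bool),
      (∀ t, suprank (Q t) ≤ s) →
      ∀ a b : ∀ t, Fin N → Fin (Nt t),
        ∃ x y : Fin N, decide (x ≤ y) ≠ Γ (fun t => Q t (a t x) (b t y)) := by
  obtain ⟨N, hN⟩ :=
    exists_strictMono_pairwise_color_eq ((Fin q → Bool) × (Fin q → Bool)) (2 * (s + 1))
  refine ⟨N, fun Γ Nt Q hQ a b => ?_⟩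
  by_contra! hGT
  obtain ⟨x, hx, ⟨D, E⟩, hcol⟩ := hN fun x y =>
    (fun t => Q t (a t y) (b t x), fun t => Q t (a t x) (b t y))
  simp only [Prod.mk.injEq] at hcol
  obtain ⟨i, j, hij⟩ : ∃ i j : Fin (2 * (s + 1)), i < j :=
    ⟨⟨0, by omega⟩, ⟨1, by omega⟩, Fin.mk_lt_mk.2 one_pos⟩
  have hD : Γ D = false := by
    rw [← (hcol i j hij).1, ← hGT, decide_eq_false (hx hij).not_ge]
  have hE : Γ E = true := by
    rw [← (hcol i j hij).2, ← hGT, decide_eq_true (hx hij).le]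
  obtain ⟨t, ht⟩ : ∃ t, D t ≠ E t := Function.ne_iff.1 fun h => by simp [h, hE] at hD
  have hlarge := le_suprank_of_halfGraph_pattern (Q t) (fun i => a t (x i)) (fun i => b t (x i)) ht
    (fun i j hij => congrFun (hcol i j hij).1 t) (fun i j hij => congrFun (hcol i j hij).2 t)
  exact absurd (hQ t) (by omega)
end

section
/- There exists a function f : ℕ → ℕ such that for every s ∈ ℕ, every N, and every boolean matrix M ∈ {0,1}^{N×N} with suprank(M) ≤ s and suprank(¬M) ≤ s, the real rank of M is at most f(s). (Together with the trivial converse, this shows SUPP ∩ coSUPP = P.) -/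
open Matrix

open Module Submodule

/-- The set of all possible 0/1 "pattern rows" arising from a pair of dual families. -/
def patSet {V W J : Type} [AddCommGroup V] [Module ℝ V] [AddCommGroup W] [Module ℝ W]
    (φ : J → V →ₗ[ℝ] ℝ) (ψ : J → W →ₗ[ℝ] ℝ) : Set (J → ℝ) :=
  {g | ∃ (u : V) (x : W), (∀ j, φ j u = 0 ↔ ψ j x ≠ 0) ∧
    g = fun j => if φ j u = 0 then (0 : ℝ) else 1}

lemma choose_step (n k : ℕ) : n.choose k ≤ (n + 1).choose (k + 1) := by
  rw [Nat.choose_succ_succ]; omega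

lemma choose_mono_aux (d a b : ℕ) : (a + b).choose a ≤ (a + d + b).choose (a + d) := by
  induction d with
  | zero => simp
  | succ d ih =>
    calc (a + b).choose a ≤ (a + d + b).choose (a + d) := ih
      _ ≤ (a + d + b + 1).choose (a + d + 1) := choose_step _ _
      _ = (a + (d + 1) + b).choose (a + (d + 1)) := by
          congr 1 <;> omega

lemma choose_mono2 {a b s : ℕ} (ha : a ≤ s) (hb : b ≤ s) :
    (a + b).choose a ≤ (s + s).choose s := by
  have h1 : (a + b).choose a ≤ (s + b).choose s := by
    have := choose_mono_aux (s - a) a b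
    rwa [show a + (s - a) = s by omega] at this
  exact h1.trans (Nat.choose_le_choose s (by omega))

theorem key (n : ℕ) :
    ∀ (V W : Type) [AddCommGroup V] [Module ℝ V] [FiniteDimensional ℝ V]
      [AddCommGroup W] [Module ℝ W] [FiniteDimensional ℝ W]
      (J : Type) [Fintype J] (φ : J → V →ₗ[ℝ] ℝ) (ψ : J → W →ₗ[ℝ] ℝ),
      finrank ℝ V + finrank ℝ W ≤ n →
      finrank ℝ (span ℝ (patSet φ ψ)) ≤
        (finrank ℝ V + finrank ℝ W).choose (finrank ℝ V) := by
  induction n using Nat.strong_induction_on with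
  | _ n ih =>
    intro V W _ _ _ _ _ _ J _ φ ψ hn
    by_cases hgood : ∃ j, φ j ≠ 0 ∧ ψ j ≠ 0
    · -- a "good column" exists; recurse on both kernels
      obtain ⟨j₀, hφ0, hψ0⟩ := hgood
      set K := LinearMap.ker (φ j₀) with hK
      set L := LinearMap.ker (ψ j₀) with hL
      -- finrank of kernels
      have hrange : ∀ {X : Type} [AddCommGroup X] [Module ℝ X] [FiniteDimensional ℝ X]
          (f : X →ₗ[ℝ] ℝ), f ≠ 0 → finrank ℝ (LinearMap.ker f) + 1 = finrank ℝ X := by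
        intro X _ _ _ f hf
        obtain ⟨u, hu⟩ : ∃ u, f u ≠ 0 := by
          by_contra h
          push_neg at h
          exact hf (LinearMap.ext fun u => h u)
        have hrtop : LinearMap.range f = ⊤ := by
          rw [eq_top_iff]
          intro c _
          refine ⟨(c / f u) • u, ?_⟩
          rw [LinearMap.map_smul]
          simp [div_mul_cancel₀ _ hu]
        have := LinearMap.finrank_range_add_finrank_ker f
        rw [hrtop] at this
        simp only [finrank_top, finrank_self] at this
        omega
      have e1 : finrank ℝ K + 1 = finrank ℝ V := hrange (φ j₀) hφ0
      have e2 : finrank ℝ L + 1 = finrank ℝ W := hrange (ψ j₀) hψ0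
      set φ' : J → K →ₗ[ℝ] ℝ := fun j => (φ j).comp K.subtype with hφ'
      set ψ' : J → L →ₗ[ℝ] ℝ := fun j => (ψ j).comp L.subtype with hψ'
      have hsub : patSet φ ψ ⊆ patSet φ' ψ ∪ patSet φ ψ' := by
        rintro g ⟨u, x, hp, rfl⟩
        by_cases h : φ j₀ u = 0
        · left
          refine ⟨⟨u, h⟩, x, fun j => ?_, ?_⟩
          · simpa [hφ'] using hp j
          · funext j; simp [hφ']
        · right
          have hx : ψ j₀ x = 0 := by
            by_contra hx
            exact h ((hp j₀).mpr hx)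
          refine ⟨u, ⟨x, hx⟩, fun j => ?_, ?_⟩
          · simpa [hψ'] using hp j
          · funext j; simp [hψ']
      have hspan : span ℝ (patSet φ ψ) ≤ span ℝ (patSet φ' ψ) ⊔ span ℝ (patSet φ ψ') := by
        rw [← Submodule.span_union]
        exact Submodule.span_mono hsub
      have hfr : finrank ℝ (span ℝ (patSet φ ψ)) ≤
          finrank ℝ (span ℝ (patSet φ' ψ)) + finrank ℝ (span ℝ (patSet φ ψ')) :=
        le_trans (Submodule.finrank_mono hspan)
          (Submodule.finrank_add_le_finrank_add_finrank _ _)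
      have ih1 := ih (finrank ℝ K + finrank ℝ W) (by omega) K W J φ' ψ le_rfl
      have ih2 := ih (finrank ℝ V + finrank ℝ L) (by omega) V L J φ ψ' le_rfl
      set aK := finrank ℝ K
      set bL := finrank ℝ L
      rw [← e2] at ih1
      rw [← e1] at ih2
      rw [← e1, ← e2]
      calc finrank ℝ (span ℝ (patSet φ ψ))
          ≤ finrank ℝ (span ℝ (patSet φ' ψ)) + finrank ℝ (span ℝ (patSet φ ψ')) := hfr
        _ ≤ (aK + (bL + 1)).choose aK + ((aK + 1) + bL).choose (aK + 1) := by
            exact Nat.add_le_add ih1 ih2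
        _ = (aK + bL + 1).choose aK + (aK + bL + 1).choose (aK + 1) := by
            congr 2 <;> omega
        _ = (aK + bL + 1 + 1).choose (aK + 1) := (Nat.choose_succ_succ _ _).symm
        _ = ((aK + 1) + (bL + 1)).choose (aK + 1) := by congr 1; omega
    · -- no good column: every pattern row equals a single fixed vector
      push_neg at hgood
      classical
      set g0 : J → ℝ := fun j => if φ j = 0 then (0 : ℝ) else 1 with hg0
      have hsub : patSet φ ψ ⊆ {g0} := by
        rintro g ⟨u, x, hp, rfl⟩
        have : (fun j => if φ j u = 0 then (0 : ℝ) else 1) = g0 := by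
          funext j
          by_cases h : φ j = 0
          · rw [hg0]
            simp [h]
          · have hψj : ψ j = 0 := hgood j h
            have hψx : ψ j x = 0 := by rw [hψj]; rfl
            have hφu : φ j u ≠ 0 := fun h0 => (hp j).mp h0 hψx
            rw [hg0]
            simp [h, hφu]
        exact this
      have h1 : finrank ℝ (span ℝ (patSet φ ψ)) ≤ finrank ℝ (span ℝ ({g0} : Set (J → ℝ))) :=
        Submodule.finrank_mono (Submodule.span_mono hsub)
      have h2 : finrank ℝ (span ℝ ({g0} : Set (J → ℝ))) ≤ 1 := by
        by_cases hz : g0 = 0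
        · rw [hz, Submodule.span_zero_singleton]
          simp
        · rw [finrank_span_singleton hz]
      have h3 : 1 ≤ (finrank ℝ V + finrank ℝ W).choose (finrank ℝ V) :=
        Nat.choose_pos (Nat.le_add_right _ _)
      omega

theorem stmt17 :
    ∃ f : ℕ → ℕ, ∀ (s N : ℕ) (M : Matrix (Fin N) (Fin N) Bool),
      suprank M ≤ s →
      suprank (Matrix.of fun i j => !(M i j)) ≤ s →
      (M.map fun b => if b then (1 : ℝ) else 0).rank ≤ f s := by
  refine ⟨fun s => (s + s).choose s, fun s N M hM hM' => ?_⟩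
  -- extract certificates
  have hne1 : {r : ℕ | ∃ A : Matrix (Fin N) (Fin N) ℝ, A.rank = r ∧
      ∀ i j, A i j = 0 ↔ M i j = false}.Nonempty := by
    refine ⟨_, M.map fun b => if b then (1 : ℝ) else 0, rfl, fun i j => ?_⟩
    cases h : M i j <;> simp [Matrix.map_apply, h]
  have hne2 : {r : ℕ | ∃ A : Matrix (Fin N) (Fin N) ℝ, A.rank = r ∧
      ∀ i j, A i j = 0 ↔ (Matrix.of fun i j => !(M i j)) i j = false}.Nonempty := by
    refine ⟨_, (Matrix.of fun i j => !(M i j)).map fun b => if b then (1 : ℝ) else 0,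
      rfl, fun i j => ?_⟩
    cases h : M i j <;> simp [h]
  obtain ⟨A, hAr, hAs⟩ := Nat.sInf_mem hne1
  obtain ⟨B, hBr, hBs⟩ := Nat.sInf_mem hne2
  have hArank : A.rank ≤ s := by rw [hAr]; exact hM
  have hBrank : B.rank ≤ s := by rw [hBr]; exact hM'
  simp only [Matrix.of_apply, Bool.not_eq_false'] at hBs
  -- set up the abstract data
  set V : Submodule ℝ (Fin N → ℝ) := span ℝ (Set.range A) with hV
  set W : Submodule ℝ (Fin N → ℝ) := span ℝ (Set.range B) with hW
  have hVr : finrank ℝ V = A.rank := (A.rank_eq_finrank_span_row).symm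
  have hWr : finrank ℝ W = B.rank := (B.rank_eq_finrank_span_row).symm
  set φ : Fin N → V →ₗ[ℝ] ℝ := fun j => (LinearMap.proj j).comp V.subtype with hφ
  set ψ : Fin N → W →ₗ[ℝ] ℝ := fun j => (LinearMap.proj j).comp W.subtype with hψ
  -- every row of the 0/1 matrix lies in the pattern set
  have hrows : Set.range (M.map fun b => if b then (1 : ℝ) else 0) ⊆ patSet φ ψ := by
    rintro g ⟨i, rfl⟩
    refine ⟨⟨A i, subset_span ⟨i, rfl⟩⟩, ⟨B i, subset_span ⟨i, rfl⟩⟩, fun j => ?_, ?_⟩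
    · have h1 : φ j ⟨A i, subset_span ⟨i, rfl⟩⟩ = A i j := rfl
      have h2 : ψ j ⟨B i, subset_span ⟨i, rfl⟩⟩ = B i j := rfl
      rw [h1, h2, hAs i j]
      cases h : M i j <;> simp [h, hBs i j]
    · funext j
      have h1 : φ j ⟨A i, subset_span ⟨i, rfl⟩⟩ = A i j := rfl
      rw [h1]
      cases h : M i j
      · have : A i j = 0 := (hAs i j).mpr h
        simp [Matrix.map_apply, h, this]
      · have : A i j ≠ 0 := by rw [Ne, hAs i j, h]; simp
        simp [Matrix.map_apply, h, this]
  have hrank : (M.map fun b => if b then (1 : ℝ) else 0).rank =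
      finrank ℝ (span ℝ (Set.range (M.map fun b => if b then (1 : ℝ) else 0))) :=
    Matrix.rank_eq_finrank_span_row _
  calc (M.map fun b => if b then (1 : ℝ) else 0).rank
      ≤ finrank ℝ (span ℝ (patSet φ ψ)) := by
        rw [hrank]
        exact Submodule.finrank_mono (Submodule.span_mono hrows)
    _ ≤ (finrank ℝ V + finrank ℝ W).choose (finrank ℝ V) := by
        exact key (finrank ℝ ↥V + finrank ℝ ↥W) ↥V ↥W (Fin N) φ ψ le_rfl
    _ ≤ (s + s).choose s := choose_mono2 (by rw [hVr]; exact hArank) (by rw [hWr]; exact hBrank)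
end

section
/- Let M ∈ {0,1}^{N×N} be a boolean matrix, let λ > 0, and suppose there exist vectors u_1, …, u_N, v_1, …, v_N in a real inner product space with ‖u_i‖ ≤ λ, ‖v_j‖ ≤ λ, and M(i,j) = ⟨u_i, v_j⟩ for all i,j. Then there exist unit vectors u'_1, …, u'_N, v'_1, …, v'_N in a real inner product space such that for all i,j: if M(i,j) = 0 then ⟨u'_i, v'_j⟩ = 0, and if M(i,j) = 1 then |⟨u'_i, v'_j⟩| ≥ 1/λ². (Γ₂ ⊆ SMAR ∩ coSMAR: matrices of γ₂-norm at most λ have a support-margin representation with margin 1/λ².) -/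
/-!
Normalize every `u i` and `v j` to a unit vector; since `⟪u i, v j⟫ ∈ {0, 1}`, the normalized
inner product is `0` where `M` is `0` and `1 / (‖u i‖ * ‖v j‖) ≥ 1 / λ²` where `M` is `1`.
A zero vector cannot be normalized, so it is replaced by a padding unit vector taken from two
extra orthogonal directions, one for the rows and one for the columns. Finally the finitely many
vectors span a finite-dimensional space, which is isometric to some `EuclideanSpace ℝ (Fin d)`.
-/

open scoped RealInnerProductSpace

section

variable {F : Type*} [NormedAddCommGroup F] [InnerProductSpace ℝ F]

open Classical in
noncomputable def normalizeOr (e x : F) : F :=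
  if x = 0 then e else ‖x‖⁻¹ • x

lemma norm_normalizeOr {e : F} (he : ‖e‖ = 1) (x : F) : ‖normalizeOr e x‖ = 1 := by
  unfold normalizeOr
  split_ifs with hx
  · exact he
  · rw [norm_smul, norm_inv, norm_norm, inv_mul_cancel₀ (norm_ne_zero_iff.mpr hx)]

lemma inner_normalizeOr_normalizeOr {e e' x y : F} (hee' : ⟪e, e'⟫ = 0) (hey : ⟪e, y⟫ = 0)
    (hxe' : ⟪x, e'⟫ = 0) :
    ⟪normalizeOr e x, normalizeOr e' y⟫ = ‖x‖⁻¹ * ‖y‖⁻¹ * ⟪x, y⟫ := by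
  unfold normalizeOr
  split_ifs with hx hy hy <;>
    simp [hx, hy, hee', hey, hxe', real_inner_smul_left, real_inner_smul_right]
  ring

lemma one_div_sq_le_inv_norm_mul_inv_norm {x y : F} {lam : ℝ} (hx : ‖x‖ ≤ lam) (hy : ‖y‖ ≤ lam)
    (hxy : ⟪x, y⟫ = 1) : 1 / lam ^ 2 ≤ ‖x‖⁻¹ * ‖y‖⁻¹ := by
  have hone : 1 ≤ ‖x‖ * ‖y‖ := hxy ▸ real_inner_le_norm x y
  calc 1 / lam ^ 2 ≤ 1 / (‖x‖ * ‖y‖) :=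
        one_div_le_one_div_of_le (by linarith) (by nlinarith [norm_nonneg x, norm_nonneg y])
    _ = ‖x‖⁻¹ * ‖y‖⁻¹ := by rw [one_div, mul_inv]

lemma exists_euclideanSpace_inner_eq {ι κ : Type*} [Finite ι] [Finite κ] (x : ι → F)
    (y : κ → F) :
    ∃ (d : ℕ) (x' : ι → EuclideanSpace ℝ (Fin d)) (y' : κ → EuclideanSpace ℝ (Fin d)),
      (∀ i, ‖x' i‖ = ‖x i‖) ∧ (∀ j, ‖y' j‖ = ‖y j‖) ∧ ∀ i j, ⟪x' i, y' j⟫ = ⟪x i, y j⟫ := by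
  let S := Submodule.span ℝ (Set.range x ∪ Set.range y)
  have : FiniteDimensional ℝ S :=
    FiniteDimensional.span_of_finite ℝ ((Set.finite_range x).union (Set.finite_range y))
  have hx : ∀ i, x i ∈ S := fun i => Submodule.subset_span (Or.inl ⟨i, rfl⟩)
  have hy : ∀ j, y j ∈ S := fun j => Submodule.subset_span (Or.inr ⟨j, rfl⟩)
  let φ := (stdOrthonormalBasis ℝ S).repr
  exact ⟨_, fun i => φ ⟨x i, hx i⟩, fun j => φ ⟨y j, hy j⟩, fun i => φ.norm_map _,
    fun j => φ.norm_map _, fun i j => φ.inner_map_map _ _⟩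

end

theorem stmt19_general {E : Type*} [NormedAddCommGroup E] [InnerProductSpace ℝ E]
    (N : ℕ) (M : Matrix (Fin N) (Fin N) Bool) (lam : ℝ)
    (u v : Fin N → E)
    (hu : ∀ i, ‖u i‖ ≤ lam) (hv : ∀ j, ‖v j‖ ≤ lam)
    (hM : ∀ i j, (inner ℝ (u i) (v j) : ℝ) = if M i j then 1 else 0) :
    ∃ (d : ℕ) (u' v' : Fin N → EuclideanSpace ℝ (Fin d)),
      (∀ i, ‖u' i‖ = 1) ∧ (∀ j, ‖v' j‖ = 1) ∧
      (∀ i j,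
        (M i j = false → (inner ℝ (u' i) (v' j) : ℝ) = 0) ∧
        (M i j = true → 1 / lam ^ 2 ≤ |(inner ℝ (u' i) (v' j) : ℝ)|)) := by
  let emb : E → WithLp 2 (E × EuclideanSpace ℝ (Fin 2)) := fun x => WithLp.toLp 2 (x, 0)
  let pad : Fin 2 → WithLp 2 (E × EuclideanSpace ℝ (Fin 2)) :=
    fun k => WithLp.toLp 2 (0, EuclideanSpace.single k 1)
  have hpad : ∀ k, ‖pad k‖ = 1 := by simp [pad]
  obtain ⟨d, u', v', hu', hv', hinner⟩ := exists_euclideanSpace_inner_eq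
    (fun i => normalizeOr (pad 0) (emb (u i))) (fun j => normalizeOr (pad 1) (emb (v j)))
  refine ⟨d, u', v', fun i => (hu' i).trans (norm_normalizeOr (hpad 0) _),
    fun j => (hv' j).trans (norm_normalizeOr (hpad 1) _), fun i j => ?_⟩
  have key : ⟪u' i, v' j⟫ = ‖u i‖⁻¹ * ‖v j‖⁻¹ * ⟪u i, v j⟫ := by
    rw [hinner, inner_normalizeOr_normalizeOr (by simp [pad, EuclideanSpace.inner_single_left]) (by simp [pad, emb])
      (by simp [pad, emb])]
    simp [emb, WithLp.norm_toLp_fst]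
  refine ⟨fun h => by simp [key, hM, h], fun h => ?_⟩
  rw [key, hM, h, if_pos rfl, mul_one]
  exact (one_div_sq_le_inv_norm_mul_inv_norm (hu i) (hv j) (by simp [hM, h])).trans
    (le_abs_self _)

theorem stmt19 {E : Type*} [NormedAddCommGroup E] [InnerProductSpace ℝ E]
    (N : ℕ) (M : Matrix (Fin N) (Fin N) Bool) (lam : ℝ) (hlam : 0 < lam)
    (u v : Fin N → E)
    (hu : ∀ i, ‖u i‖ ≤ lam) (hv : ∀ j, ‖v j‖ ≤ lam)
    (hM : ∀ i j, (inner ℝ (u i) (v j) : ℝ) = if M i j then 1 else 0) :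
    ∃ (d : ℕ) (u' v' : Fin N → EuclideanSpace ℝ (Fin d)),
      (∀ i, ‖u' i‖ = 1) ∧ (∀ j, ‖v' j‖ = 1) ∧
      (∀ i j,
        (M i j = false → (inner ℝ (u' i) (v' j) : ℝ) = 0) ∧
        (M i j = true → 1 / lam ^ 2 ≤ |(inner ℝ (u' i) (v' j) : ℝ)|)) :=
  stmt19_general N M lam u v hu hv hM
end
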